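/- arXiv:0810.1823 — 6 statements merged into one kernel-verified Lean document; each statement's English description precedes it below -/
import Mathlib

section
/- Let (T,F) be a graph-labelled tree. The accessibility graph G(T,F) is connected if and only if for every internal node v of T the label graph G_v is connected. -/
open SimpleGraph

variable {V : Type}

/-- A vertex of a tree is a leaf if it has exactly one neighbour. -/
def IsLeaf (T : SimpleGraph V) (v : V) : Prop := ∃! w, T.Adj v w

/-- Admissibility of a walk in a graph-labelled tree: at every internal vertex of the
walk, the marker vertices corresponding to the two consecutive tree-edges are adjacent
in the label graph. -/
inductive Admissible (T : SimpleGraph V) (F : ∀ v : V, SimpleGraph (T.neighborSet v)) :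
    ∀ {a b : V}, T.Walk a b → Prop
  | nil {a : V} : Admissible T F (SimpleGraph.Walk.nil : T.Walk a a)
  | single {a b : V} (h : T.Adj a b) :
      Admissible T F (SimpleGraph.Walk.cons h SimpleGraph.Walk.nil)
  | cons {a v b c : V} (h1 : T.Adj a v) (h2 : T.Adj v b) (p : T.Walk b c)
      (hadj : (F v).Adj ⟨a, h1.symm⟩ ⟨b, h2⟩)
      (hp : Admissible T F (SimpleGraph.Walk.cons h2 p)) :
      Admissible T F (SimpleGraph.Walk.cons h1 (SimpleGraph.Walk.cons h2 p))

/-- `b` is accessible from `a`: the (unique) path joining them is admissible. -/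
def Accessible (T : SimpleGraph V) (F : ∀ v : V, SimpleGraph (T.neighborSet v))
    (a b : V) : Prop :=
  ∃ p : T.Walk a b, p.IsPath ∧ Admissible T F p

/-- The accessibility graph of a graph-labelled tree: vertices are the leaves of the
tree, two leaves being adjacent iff one is accessible from the other. -/
def accGraph (T : SimpleGraph V) (F : ∀ v : V, SimpleGraph (T.neighborSet v)) :
    SimpleGraph {v : V // IsLeaf T v} :=
  SimpleGraph.fromRel (fun x y => Accessible T F ↑x ↑y)

/-! Admissible walks never backtrack, because the label graphs are loopless, so in a tree they
are paths: two leaves are adjacent in `accGraph T F` exactly when an admissible walk joins them.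

If every label graph is connected, let `admissibleLeaves T F u v` be the set of leaves reached by
admissible walks starting with the tree-edge `uv`. These sets are nonempty, each leaf of
`admissibleLeaves T F u v` is adjacent to each leaf of `admissibleLeaves T F v u`, and an edge
`m₁m₂` of `F v` puts `admissibleLeaves T F v m₂` inside `admissibleLeaves T F m₁ v`. Chaining these
facts along walks in `F v` and along walks in `T` connects any two leaves.

Conversely, fix an internal node `v`. Moving along an edge of the accessibility graph, the branch
of `T` at `v` containing the current leaf either stays the same or changes to an `F v`-adjacent
one. So a walk between leaves in the branches of `m₁` and `m₂` gives an `F v`-walk from `m₁` to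
`m₂`.
-/

section

variable {T : SimpleGraph V} {F : ∀ v : V, SimpleGraph (T.neighborSet v)}

theorem exists_adj_ne_of_not_isLeaf {w m : V} (hw : ¬ IsLeaf T w) (hm : T.Adj w m) :
    ∃ m', T.Adj w m' ∧ m' ≠ m := by
  by_contra! h
  exact hw ⟨m, hm, h⟩

namespace Admissible

theorem cons_cons_iff {a v b c : V} {h₁ : T.Adj a v} {h₂ : T.Adj v b} {p : T.Walk b c} :
    Admissible T F (.cons h₁ (.cons h₂ p)) ↔
      (F v).Adj ⟨a, h₁.symm⟩ ⟨b, h₂⟩ ∧ Admissible T F (.cons h₂ p) :=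
  ⟨fun h => by cases h with | cons _ _ _ hadj hp => exact ⟨hadj, hp⟩,
    fun h => .cons h₁ h₂ p h.1 h.2⟩

theorem append_cons {a u v c : V} {p : T.Walk a u} {h : T.Adj u v} {q : T.Walk v c}
    (hp : Admissible T F (p.append (.cons h .nil))) (hq : Admissible T F (.cons h q)) :
    Admissible T F (p.append (.cons h q)) := by
  induction p with
  | nil => simpa using hq
  | cons h' p ih =>
    cases p with
    | nil => exact .cons _ _ _ (cons_cons_iff.mp hp).1 hq
    | cons h'' p =>
      rw [Walk.cons_append, Walk.cons_append] at hp ⊢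
      have hrest := ih (cons_cons_iff.mp hp).2 hq
      rw [Walk.cons_append] at hrest
      exact .cons _ _ _ (cons_cons_iff.mp hp).1 hrest

theorem reverse {a b : V} {p : T.Walk a b} (hp : Admissible T F p) :
    Admissible T F p.reverse := by
  induction hp with
  | nil => exact .nil
  | single h => simpa using single h.symm
  | cons h₁ h₂ p hadj _ ih =>
    rw [Walk.reverse_cons, Walk.reverse_cons, ← Walk.append_assoc, Walk.cons_append,
      Walk.nil_append]
    exact append_cons (by rwa [← Walk.reverse_cons]) (.cons _ _ _ hadj.symm (.single h₁.symm))

theorem adj_of_append {x c v d y : V} {p : T.Walk x c} {h₁ : T.Adj c v} {h₂ : T.Adj v d}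
    {r : T.Walk d y} (hp : Admissible T F (p.append (.cons h₁ (.cons h₂ r)))) :
    (F v).Adj ⟨c, h₁.symm⟩ ⟨d, h₂⟩ := by
  induction p with
  | nil => exact (cons_cons_iff.mp hp).1
  | cons h p ih =>
    cases p with
    | nil => exact ih (cons_cons_iff.mp hp).2
    | cons h' p => exact ih (by rw [Walk.cons_append] at hp ⊢; exact (cons_cons_iff.mp hp).2)

theorem isPath (hA : T.IsAcyclic) {a b : V} {p : T.Walk a b} (hp : Admissible T F p) :
    p.IsPath := by
  induction hp with
  | nil => exact .nil
  | single h => simpa using h.ne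
  | @cons a v b c h₁ h₂ p hadj _ ih =>
    classical
    refine ih.cons fun ha => ?_
    have hw : (Walk.cons h₂ p).takeUntil a ha = .cons h₁.symm .nil :=
      congrArg Subtype.val <| (hA.subsingleton_path v a).elim ⟨_, ih.takeUntil ha⟩
        ⟨.cons h₁.symm .nil, by simpa using h₁.ne.symm⟩
    have hsplit := (Walk.cons h₂ p).take_spec ha
    rw [hw, Walk.cons_append, Walk.nil_append] at hsplit
    obtain rfl : a = b := by simpa using congrArg Walk.snd hsplit
    exact (F v).irrefl hadj

theorem exists_cons
    (hF : ∀ w, ¬ IsLeaf T w → ∀ m : T.neighborSet w, ∃ m', (F w).Adj m m')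
    {a b : V} {p : T.Walk a b} (hp : Admissible T F p) (hnil : ¬ p.Nil) (ha : ¬ IsLeaf T a) :
    ∃ (c : V) (h : T.Adj c a), Admissible T F (.cons h p) := by
  cases p with
  | nil => exact absurd .nil hnil
  | cons h p =>
    obtain ⟨c, hc⟩ := hF a ha ⟨_, h⟩
    exact ⟨c, c.2.symm, .cons _ _ _ hc.symm hp⟩

/-- Admissible walks are paths, so they cannot be extended forever in a finite forest; the
extension stops only at a leaf. -/
theorem exists_isLeaf_cons [Fintype V] (hA : T.IsAcyclic)
    (hF : ∀ w, ¬ IsLeaf T w → ∀ m : T.neighborSet w, ∃ m', (F w).Adj m m')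
    {u v : V} (huv : T.Adj u v) :
    ∃ l, IsLeaf T l ∧ ∃ q : T.Walk v l, Admissible T F (.cons huv q) := by
  by_contra! hno
  have hgrow : ∀ n, ∃ (a : V) (q : T.Walk a v),
      n ≤ q.length ∧ Admissible T F (q.append (.cons huv.symm .nil)) := by
    intro n
    induction n with
    | zero => exact ⟨v, .nil, le_rfl, .single huv.symm⟩
    | succ n ih =>
      obtain ⟨a, q, hlen, hq⟩ := ih
      have ha : ¬ IsLeaf T a := fun ha => hno a ha q.reverse (by simpa using hq.reverse)
      obtain ⟨c, hca, hc⟩ := hq.exists_cons hF (by simp) ha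
      exact ⟨c, .cons hca q, by simpa using hlen, hc⟩
  obtain ⟨a, q, hlen, hq⟩ := hgrow (Fintype.card V)
  have := (hq.isPath hA).length_lt
  simp only [Walk.length_append, Walk.length_cons, Walk.length_nil] at this
  omega

end Admissible

theorem accGraph_adj_of_admissible (hA : T.IsAcyclic) {x y : V} (hx : IsLeaf T x)
    (hy : IsLeaf T y) {p : T.Walk x y} (hp : Admissible T F p) (hnil : ¬ p.Nil) :
    (accGraph T F).Adj ⟨x, hx⟩ ⟨y, hy⟩ := by
  have hpath := hp.isPath hA
  refine (fromRel_adj _ _ _).mpr ⟨fun h => hnil ?_, .inl ⟨p, hpath, hp⟩⟩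
  exact hpath.nil_iff_eq.mpr (congrArg Subtype.val h)

def admissibleLeaves (T : SimpleGraph V) (F : ∀ v : V, SimpleGraph (T.neighborSet v))
    (u v : V) : Set V :=
  {l | IsLeaf T l ∧ ∃ (h : T.Adj u v) (q : T.Walk v l), Admissible T F (.cons h q)}

theorem admissibleLeaves_nonempty [Fintype V] (hA : T.IsAcyclic)
    (hF : ∀ w, ¬ IsLeaf T w → (F w).Connected) {u v : V} (huv : T.Adj u v) :
    (admissibleLeaves T F u v).Nonempty := by
  have hF' : ∀ w, ¬ IsLeaf T w → ∀ m : T.neighborSet w, ∃ m', (F w).Adj m m' := by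
    intro w hw m
    obtain ⟨m', hm', hne⟩ := exists_adj_ne_of_not_isLeaf hw m.2
    obtain ⟨p⟩ := (hF w hw).preconnected m ⟨m', hm'⟩
    have hnil : ¬ p.Nil := fun h => hne (congrArg Subtype.val h.eq).symm
    exact ⟨_, p.adj_snd hnil⟩
  obtain ⟨l, hl, q, hq⟩ := Admissible.exists_isLeaf_cons hA hF' huv
  exact ⟨l, hl, huv, q, hq⟩

theorem accGraph_adj_of_mem_admissibleLeaves (hA : T.IsAcyclic) {u v l l' : V}
    (hl : l ∈ admissibleLeaves T F u v) (hl' : l' ∈ admissibleLeaves T F v u) :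
    (accGraph T F).Adj ⟨l, hl.1⟩ ⟨l', hl'.1⟩ := by
  obtain ⟨-, huv, q, hq⟩ := hl
  obtain ⟨-, hvu, q', hq'⟩ := hl'
  refine accGraph_adj_of_admissible hA _ _ (p := q.reverse.append (.cons hvu q')) ?_ (by simp)
  exact Admissible.append_cons (by simpa using hq.reverse) hq'

theorem mem_admissibleLeaves_of_adj {v l : V} {m₁ m₂ : T.neighborSet v}
    (hm : (F v).Adj m₁ m₂) (hl : l ∈ admissibleLeaves T F v m₂) :
    l ∈ admissibleLeaves T F m₁ v := by
  obtain ⟨hleaf, h, q, hq⟩ := hl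
  exact ⟨hleaf, m₁.2.symm, .cons h q, .cons _ _ _ hm hq⟩

theorem reachable_of_forall_connected (hF : ∀ w, ¬ IsLeaf T w → (F w).Connected) (w : V)
    (m m' : T.neighborSet w) : (F w).Reachable m m' := by
  by_cases hw : IsLeaf T w
  · obtain ⟨z, -, hz⟩ := hw
    rw [Subtype.ext ((hz _ m.2).trans (hz _ m'.2).symm)]
  · exact (hF w hw).preconnected m m'

section LabelsConnected

variable [Fintype V] (hA : T.IsAcyclic) (hF : ∀ w, ¬ IsLeaf T w → (F w).Connected)
include hA hF

theorem accGraph_reachable_of_mem_admissibleLeaves {v : V} {m₁ m₂ : T.neighborSet v}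
    (hm : (F v).Reachable m₁ m₂) {l₁ l₂ : V} (hl₁ : l₁ ∈ admissibleLeaves T F v m₁)
    (hl₂ : l₂ ∈ admissibleLeaves T F v m₂) :
    (accGraph T F).Reachable ⟨l₁, hl₁.1⟩ ⟨l₂, hl₂.1⟩ := by
  obtain ⟨W⟩ := hm
  induction W generalizing l₁ with
  | @nil m =>
    obtain ⟨l, hl⟩ := admissibleLeaves_nonempty hA hF m.2.symm
    exact (accGraph_adj_of_mem_admissibleLeaves hA hl₁ hl).reachable.trans
      (accGraph_adj_of_mem_admissibleLeaves hA hl hl₂).reachable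
  | @cons m₁ n m₂ hadj W ih =>
    obtain ⟨l, hl⟩ := admissibleLeaves_nonempty hA hF n.2
    exact (accGraph_adj_of_mem_admissibleLeaves hA hl₁
      (mem_admissibleLeaves_of_adj hadj hl)).reachable.trans (ih hl hl₂)

theorem accGraph_reachable_of_walk {a b : V} (W : T.Walk a b) {m m' l l' : V}
    (hl : l ∈ admissibleLeaves T F a m) (hl' : l' ∈ admissibleLeaves T F b m') :
    (accGraph T F).Reachable ⟨l, hl.1⟩ ⟨l', hl'.1⟩ := by
  induction W generalizing m l with
  | nil =>
    exact accGraph_reachable_of_mem_admissibleLeaves (m₁ := ⟨m, hl.2.1⟩) (m₂ := ⟨m', hl'.2.1⟩)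
      hA hF (reachable_of_forall_connected hF _ _ _) hl hl'
  | cons hac W ih =>
    obtain ⟨l₁, hl₁⟩ := admissibleLeaves_nonempty hA hF hac
    obtain ⟨l₂, hl₂⟩ := admissibleLeaves_nonempty hA hF hac.symm
    have hll₁ := accGraph_reachable_of_mem_admissibleLeaves (m₁ := ⟨m, hl.2.1⟩) (m₂ := ⟨_, hac⟩)
      hA hF (reachable_of_forall_connected hF _ _ _) hl hl₁
    exact hll₁.trans
      ((accGraph_adj_of_mem_admissibleLeaves hA hl₁ hl₂).reachable.trans (ih hl₂ hl'))

end LabelsConnected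

theorem accGraph_connected_of_forall_connected [Fintype V] (hT : T.IsTree)
    (hF : ∀ w, ¬ IsLeaf T w → (F w).Connected) : (accGraph T F).Connected := by
  have hmem : ∀ l, IsLeaf T l → ∃ v, l ∈ admissibleLeaves T F v l := fun l hl =>
    let ⟨v, hv, _⟩ := hl
    ⟨v, hl, hv.symm, .nil, .single _⟩
  refine (connected_iff _).mpr ⟨?_, ?_⟩
  · rintro ⟨x, hx⟩ ⟨y, hy⟩
    obtain ⟨vx, hvx⟩ := hmem x hx
    obtain ⟨vy, hvy⟩ := hmem y hy
    obtain ⟨W⟩ := hT.connected.preconnected vx vy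
    exact accGraph_reachable_of_walk hT.isAcyclic hF W hvx hvy
  · obtain ⟨v⟩ := hT.connected.nonempty
    by_cases hv : IsLeaf T v
    · exact ⟨⟨v, hv⟩⟩
    · obtain ⟨⟨m, hm⟩⟩ := (hF v hv).nonempty
      obtain ⟨l, hl⟩ := admissibleLeaves_nonempty hT.isAcyclic hF hm
      exact ⟨⟨l, hl.1⟩⟩

theorem SimpleGraph.IsAcyclic.eq_of_isPath_cons (hA : T.IsAcyclic) {v m m' l : V}
    {h : T.Adj v m} {h' : T.Adj v m'} {q : T.Walk m l} {q' : T.Walk m' l}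
    (hq : (Walk.cons h q).IsPath) (hq' : (Walk.cons h' q').IsPath) : m = m' := by
  have := congrArg Subtype.val ((hA.subsingleton_path v l).elim ⟨_, hq⟩ ⟨_, hq'⟩)
  simpa using congrArg Walk.snd this

theorem SimpleGraph.Connected.exists_isPath_cons (hT : T.Connected) {v l : V} (hvl : v ≠ l) :
    ∃ (m : V) (h : T.Adj v m) (q : T.Walk m l), (Walk.cons h q).IsPath := by
  obtain ⟨p, hp⟩ := hT.preconnected.exists_isPath v l
  obtain ⟨m, h, q, rfl⟩ := Walk.exists_eq_cons_of_ne hvl p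
  exact ⟨m, h, q, hp⟩

theorem exists_isLeaf_isPath_cons [Fintype V] (hA : T.IsAcyclic) {u v : V} (huv : T.Adj u v) :
    ∃ l, IsLeaf T l ∧ ∃ q : T.Walk v l, (Walk.cons huv q).IsPath := by
  -- With complete labels, admissibility only forbids backtracking.
  have hF : ∀ w, ¬ IsLeaf T w → ∀ m : T.neighborSet w, ∃ m', (⊤ : SimpleGraph _).Adj m m' :=
    fun w hw m =>
      let ⟨m', hm', hne⟩ := exists_adj_ne_of_not_isLeaf hw m.2
      ⟨⟨m', hm'⟩, fun h => hne (congrArg Subtype.val h).symm⟩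
  obtain ⟨l, hl, q, hq⟩ := Admissible.exists_isLeaf_cons hA hF huv
  exact ⟨l, hl, q, hq.isPath hA⟩

theorem eq_or_adj_of_admissible (hA : T.IsAcyclic) {v m₁ m₂ l₁ l₂ : V}
    {h₁ : T.Adj v m₁} {h₂ : T.Adj v m₂} {q₁ : T.Walk m₁ l₁} {q₂ : T.Walk m₂ l₂}
    (hq₁ : (Walk.cons h₁ q₁).IsPath) (hq₂ : (Walk.cons h₂ q₂).IsPath)
    {p : T.Walk l₁ l₂} (hp : Admissible T F p) :
    m₁ = m₂ ∨ (F v).Adj ⟨m₁, h₁⟩ ⟨m₂, h₂⟩ := by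
  classical
  have hvl₁ : v ≠ l₁ := fun h => Walk.not_nil_cons (hq₁.nil_iff_eq.mpr h)
  have hvl₂ : v ≠ l₂ := fun h => Walk.not_nil_cons (hq₂.nil_iff_eq.mpr h)
  by_cases hv : v ∈ p.support
  · right
    have hpath := hp.isPath hA
    obtain ⟨c, hc, r₁, hr₁⟩ := Walk.exists_eq_cons_of_ne hvl₁ (p.takeUntil v hv).reverse
    obtain ⟨d, hd, r₂, hr₂⟩ := Walk.exists_eq_cons_of_ne hvl₂ (p.dropUntil v hv)
    obtain rfl := hA.eq_of_isPath_cons hq₁ (hr₁ ▸ (hpath.takeUntil hv).reverse)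
    obtain rfl := hA.eq_of_isPath_cons hq₂ (hr₂ ▸ hpath.dropUntil hv)
    have hsplit : p = r₁.reverse.append (.cons hc.symm (.cons hd r₂)) := by
      rw [← p.take_spec hv, ← hr₂, ← (p.takeUntil v hv).reverse_reverse, hr₁, Walk.reverse_cons,
        ← Walk.append_assoc]
      rfl
    exact (hsplit ▸ hp).adj_of_append
  · left
    have hvq₁ : v ∉ q₁.support := ((Walk.cons_isPath_iff _ _).mp hq₁).2
    have hpath : (Walk.cons h₁ (q₁.append p).bypass).IsPath := by
      refine (Walk.bypass_isPath _).cons fun hmem => ?_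
      rcases (Walk.mem_support_append_iff _ _).mp
        ((q₁.append p).support_bypass_subset_support hmem) with h | h
      exacts [hvq₁ h, hv h]
    exact hA.eq_of_isPath_cons hpath hq₂

theorem reachable_of_accGraph_walk (hT : T.IsTree) {v : V} (hv : ¬ IsLeaf T v)
    {x y : {l : V // IsLeaf T l}} (W : (accGraph T F).Walk x y) {m₁ m₂ : V}
    {h₁ : T.Adj v m₁} {h₂ : T.Adj v m₂} {q₁ : T.Walk m₁ x} {q₂ : T.Walk m₂ y}
    (hq₁ : (Walk.cons h₁ q₁).IsPath) (hq₂ : (Walk.cons h₂ q₂).IsPath) :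
    (F v).Reachable ⟨m₁, h₁⟩ ⟨m₂, h₂⟩ := by
  induction W generalizing m₁ with
  | nil =>
    obtain rfl := hT.isAcyclic.eq_of_isPath_cons hq₁ hq₂
    rfl
  | @cons x z y hxz W ih =>
    obtain ⟨m, h, q, hq⟩ := hT.connected.exists_isPath_cons fun h : v = z => hv (h ▸ z.2)
    have hstep : m₁ = m ∨ (F v).Adj ⟨m₁, h₁⟩ ⟨m, h⟩ := by
      rcases ((fromRel_adj _ _ _).mp hxz).2 with ⟨p, -, hp⟩ | ⟨p, -, hp⟩
      · exact eq_or_adj_of_admissible hT.isAcyclic hq₁ hq hp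
      · exact (eq_or_adj_of_admissible hT.isAcyclic hq hq₁ hp).imp Eq.symm Adj.symm
    rcases hstep with rfl | hadj
    · exact ih hq hq₂
    · exact hadj.reachable.trans (ih hq hq₂)

theorem connected_of_accGraph_connected [Fintype V] (hT : T.IsTree)
    (hconn : (accGraph T F).Connected) {v : V} (hv : ¬ IsLeaf T v) : (F v).Connected := by
  obtain ⟨⟨l, hl⟩⟩ := hconn.nonempty
  obtain ⟨m, h, -⟩ := hT.connected.exists_isPath_cons fun h : v = l => hv (h ▸ hl)
  refine (connected_iff _).mpr ⟨?_, ⟨⟨m, h⟩⟩⟩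
  rintro ⟨m₁, h₁⟩ ⟨m₂, h₂⟩
  obtain ⟨l₁, hl₁, q₁, hq₁⟩ := exists_isLeaf_isPath_cons hT.isAcyclic h₁
  obtain ⟨l₂, hl₂, q₂, hq₂⟩ := exists_isLeaf_isPath_cons hT.isAcyclic h₂
  obtain ⟨W⟩ := hconn.preconnected ⟨l₁, hl₁⟩ ⟨l₂, hl₂⟩
  exact reachable_of_accGraph_walk hT hv W hq₁ hq₂

end

/-- the accessibility graph of a graph-labelled tree is connected iff
every internal node carries a connected label graph. -/
theorem stmt0 [Fintype V] (T : SimpleGraph V) (hT : T.IsTree)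
    (F : ∀ v : V, SimpleGraph (T.neighborSet v)) :
    (accGraph T F).Connected ↔ ∀ v : V, ¬ IsLeaf T v → (F v).Connected :=
  ⟨fun h _ => connected_of_accGraph_connected hT h, accGraph_connected_of_forall_connected hT⟩
end

section
/- If a graph-labelled tree (T',F') is obtained from a graph-labelled tree (T,F) by a join operation on a tree-edge uv (merging the adjacent nodes u and v into a single node w whose label is formed from G_u and G_v by deleting the two marker vertices ρ_u(uv), ρ_v(uv) and adding all edges between the neighbourhood of ρ_u(uv) in G_u and the neighbourhood of ρ_v(uv) in G_v), then the accessibility graphs satisfy G(T,F) = G(T',F'). -/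
open SimpleGraph

variable {V : Type}

/-!
Contracting `uv` maps the path of `T` between two leaves `l, l'` onto the path of the
contracted tree between them: `v` is renamed `u` and the dart along `uv`, if the path uses it,
is dropped. Admissibility is a condition on consecutive darts, and the join labels are exactly
such that each turn of the contracted path is allowed iff the corresponding turns of the
original path are; at the merged node, a turn from a neighbour of `u` to a neighbour of `v`
is allowed iff the turns at `u` and at `v` both are. The contracted tree is again a tree (one
vertex and one edge fewer, still connected), so these paths are the unique ones and
accessibility is preserved. A leaf `l ≠ u` keeps its neighbourhood up to renaming, while the
merged node inherits a neighbour from each of the internal nodes `u` and `v`.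
-/

theorem List.IsChain.and {α : Type*} {R S : α → α → Prop} :
    ∀ {l : List α}, l.IsChain R → l.IsChain S → l.IsChain (fun a b => R a b ∧ S a b)
  | [], _, _ => .nil
  | [_], _, _ => .singleton _
  | _ :: _ :: _, hR, hS => by
    rw [List.isChain_cons_cons] at *
    exact ⟨⟨hR.1, hS.1⟩, hR.2.and hS.2⟩

theorem List.isChain_filterMap_iff {α β : Type*} {f : α → Option β} {Q R : α → α → Prop}
    {R' : β → β → Prop}
    (hsep : ∀ x y, Q x y → f x = none → f y = none → False)
    (hrel : ∀ x y x' y', Q x y → f x = some x' → f y = some y' → (R x y ↔ R' x' y'))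
    (hrel₂ : ∀ x y z x' z', Q x y → Q y z → f x = some x' → f y = none → f z = some z' →
      (R x y ∧ R y z ↔ R' x' z')) :
    ∀ {l : List α}, l.IsChain Q → (∀ x ∈ l.head?, f x ≠ none) → (∀ x ∈ l.getLast?, f x ≠ none) →
      (l.IsChain R ↔ (l.filterMap f).IsChain R')
  | [], _, _, _ => by simp
  | [x], _, hhead, _ => by
    obtain ⟨x', hx⟩ := Option.ne_none_iff_exists'.mp (hhead x rfl)
    simp [hx]
  | x :: y :: l, hQ, hhead, hlast => by
    obtain ⟨x', hx⟩ := Option.ne_none_iff_exists'.mp (hhead x rfl)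
    rw [List.isChain_cons_cons] at hQ
    cases hy : f y with
    | some y' =>
      have ih := isChain_filterMap_iff hsep hrel hrel₂ hQ.2 (by simp [hy]) (by simpa using hlast)
      rw [List.filterMap_cons_some hx, List.isChain_cons_cons, ih, List.filterMap_cons_some hy,
        List.isChain_cons_cons, hrel x y x' y' hQ.1 hx hy]
    | none =>
      match l, hQ, hlast with
      | [], _, hlast => exact absurd hy (hlast y (by simp))
      | z :: l, hQ, hlast =>
        rw [List.isChain_cons_cons] at hQ
        obtain ⟨z', hz⟩ := Option.ne_none_iff_exists'.mp fun hz => hsep y z hQ.2.1 hy hz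
        have ih := isChain_filterMap_iff hsep hrel hrel₂ hQ.2.2 (by simp [hz])
          (by simpa using hlast)
        rw [List.filterMap_cons_some hx, List.filterMap_cons_none hy, List.isChain_cons_cons,
          List.isChain_cons_cons, ← and_assoc, ih, List.filterMap_cons_some hz,
          List.isChain_cons_cons, hrel₂ x y z x' z' hQ.1 hQ.2.1 hx hy hz]

theorem exists_adj_ne_of_not_isLeaf_s5 {G : SimpleGraph V} {x y : V} (hx : ¬IsLeaf G x)
    (hxy : G.Adj x y) : ∃ z, G.Adj x z ∧ z ≠ y := by
  by_contra! h
  exact hx ⟨y, hxy, h⟩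

theorem isLeaf_iff_ncard_neighborSet {G : SimpleGraph V} {x : V} :
    IsLeaf G x ↔ (G.neighborSet x).ncard = 1 := by
  simp only [Set.ncard_eq_one, Set.eq_singleton_iff_unique_mem, mem_neighborSet]
  rfl

section Turn

variable {G : SimpleGraph V} {F : ∀ x : V, SimpleGraph (G.neighborSet x)}

def Turn (G : SimpleGraph V) (F : ∀ x : V, SimpleGraph (G.neighborSet x)) (a x b : V) : Prop :=
  ∃ (ha : G.Adj x a) (hb : G.Adj x b), (F x).Adj ⟨a, ha⟩ ⟨b, hb⟩

theorem turn_iff_adj {a x b : V} (ha : G.Adj x a) (hb : G.Adj x b) :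
    Turn G F a x b ↔ (F x).Adj ⟨a, ha⟩ ⟨b, hb⟩ :=
  ⟨fun ⟨_, _, h⟩ => h, fun h => ⟨ha, hb, h⟩⟩

theorem turn_comm {a x b : V} : Turn G F a x b ↔ Turn G F b x a :=
  ⟨fun ⟨ha, hb, h⟩ => ⟨hb, ha, h.symm⟩, fun ⟨ha, hb, h⟩ => ⟨hb, ha, h.symm⟩⟩

theorem admissible_cons_cons_iff {a x b c : V} (h : G.Adj a x) (h' : G.Adj x b)
    (p : G.Walk b c) :
    Admissible G F (.cons h (.cons h' p)) ↔ Turn G F a x b ∧ Admissible G F (.cons h' p) := by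
  constructor
  · intro hadm
    cases hadm with
    | cons _ _ _ hturn hp => exact ⟨⟨h.symm, h', hturn⟩, hp⟩
  · rintro ⟨⟨_, _, hturn⟩, hp⟩
    exact .cons h h' p hturn hp

theorem admissible_iff_isChain_darts {a b : V} (p : G.Walk a b) :
    Admissible G F p ↔ p.darts.IsChain (fun d d' => Turn G F d.fst d.snd d'.snd) := by
  induction p with
  | nil => simpa using Admissible.nil
  | cons h p ih =>
    cases p with
    | nil => simpa using Admissible.single h
    | cons h' q =>
      rw [admissible_cons_cons_iff, ih]
      simp only [Walk.darts_cons, List.isChain_cons_cons]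

theorem accessible_iff_admissible (hG : G.IsAcyclic) {a b : V} {p : G.Walk a b}
    (hp : p.IsPath) : Accessible G F a b ↔ Admissible G F p := by
  refine ⟨fun ⟨q, hq, h⟩ => ?_, fun h => ⟨p, hp, h⟩⟩
  obtain rfl : q = p := congrArg Subtype.val ((hG.subsingleton_path a b).elim ⟨q, hq⟩ ⟨p, hp⟩)
  exact h

end Turn

namespace SimpleGraph

section Walks

variable {G : SimpleGraph V}

theorem IsAcyclic.not_adj_of_adj_of_adj (hG : G.IsAcyclic) {a b c : V} (hab : G.Adj a b)
    (hbc : G.Adj b c) : ¬G.Adj a c := fun hac => by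
  classical
  exact hG.cliqueFree le_rfl {a, b, c} (is3Clique_triple_iff.mpr ⟨hab, hac, hbc⟩)

theorem Walk.isChain_edges_iff_isChain_darts {a b : V} (p : G.Walk a b) :
    p.edges.IsChain (· ≠ ·) ↔ p.darts.IsChain (fun d d' => d.fst ≠ d'.snd) := by
  rw [Walk.edges, List.isChain_map]
  induction p with
  | nil => simp
  | cons h p ih =>
    cases p with
    | nil => simp
    | cons h' q =>
      simp only [Walk.darts_cons, List.isChain_cons_cons] at ih ⊢
      rw [ih, Dart.edge_mk, Dart.edge_mk, Sym2.eq_swap, Ne, Sym2.congr_right]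

theorem IsAcyclic.isPath_iff_isChain_darts (hG : G.IsAcyclic) {a b : V} (p : G.Walk a b) :
    p.IsPath ↔ p.darts.IsChain (fun d d' => d.fst ≠ d'.snd) :=
  (hG.isPath_iff_isChain p).trans p.isChain_edges_iff_isChain_darts

theorem Walk.IsPath.isChain_darts {a b : V} {p : G.Walk a b} (hp : p.IsPath) :
    p.darts.IsChain (fun d d' => G.DartAdj d d' ∧ d.fst ≠ d'.snd) :=
  p.isChain_dartAdj_darts.and
    (p.isChain_edges_iff_isChain_darts.mp hp.isTrail.edges_nodup.isChain)

theorem Walk.fst_of_mem_head?_darts {a b : V} (p : G.Walk a b) :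
    ∀ d ∈ p.darts.head?, d.fst = a := by
  cases p <;> simp

theorem Walk.snd_of_mem_getLast?_darts {a b : V} (p : G.Walk a b) :
    ∀ d ∈ p.darts.getLast?, d.snd = b := by
  induction p with
  | nil => simp
  | cons h p ih =>
    cases p with
    | nil => simp
    | cons h' q => simpa [List.getLast?_cons_cons] using ih

end Walks

def contractEdge (T : SimpleGraph V) (u v : V) : SimpleGraph {x : V // x ≠ v} where
  Adj a b := T.Adj a b ∨ ((a : V) = u ∧ T.Adj v b ∧ (b : V) ≠ u) ∨
    ((b : V) = u ∧ T.Adj v a ∧ (a : V) ≠ u)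
  symm := ⟨by
    rintro a b (h | h | h)
    exacts [.inl h.symm, .inr (.inr h), .inr (.inl h)]⟩
  loopless := ⟨by
    rintro a (h | ⟨h1, -, h2⟩ | ⟨h1, -, h2⟩)
    exacts [T.loopless.irrefl _ h, h2 h1, h2 h1]⟩

variable {T : SimpleGraph V} {u v : V}

open Classical in
noncomputable def contractVertex (huv : u ≠ v) (x : V) : {x : V // x ≠ v} :=
  if h : x = v then ⟨u, huv⟩ else ⟨x, h⟩

section Contraction

variable (huv : u ≠ v)

theorem contractVertex_of_ne {x : V} (hx : x ≠ v) : contractVertex huv x = ⟨x, hx⟩ := by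
  simp [contractVertex, hx]

theorem contractVertex_right : contractVertex huv v = ⟨u, huv⟩ := by
  simp [contractVertex]

theorem contractVertex_left : contractVertex huv u = ⟨u, huv⟩ :=
  contractVertex_of_ne huv huv

theorem contractVertex_eq_iff {a b : V} :
    contractVertex huv a = contractVertex huv b ↔ a = b ∨ (a = u ∧ b = v) ∨ (a = v ∧ b = u) := by
  unfold contractVertex
  split_ifs <;> simp [Subtype.ext_iff] <;> grind

theorem contractVertex_eq_of_edge_eq {a b : V} (he : s(a, b) = s(u, v)) :
    contractVertex huv a = contractVertex huv b := by
  rw [contractVertex_eq_iff]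
  rcases Sym2.eq_iff.mp he with ⟨rfl, rfl⟩ | ⟨rfl, rfl⟩ <;> simp

theorem contractEdge_adj_contractVertex {a b : V} (hab : T.Adj a b) (he : s(a, b) ≠ s(u, v)) :
    (T.contractEdge u v).Adj (contractVertex huv a) (contractVertex huv b) := by
  by_cases ha : a = v <;> by_cases hb : b = v
  · exact absurd (ha.trans hb.symm) hab.ne
  · subst ha
    refine .inr (.inl ⟨by simp [contractVertex_right], ?_⟩)
    simp only [contractVertex_of_ne huv hb]
    refine ⟨hab, fun hbu => he ?_⟩
    rw [hbu, Sym2.eq_swap]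
  · subst hb
    refine .inr (.inr ⟨by simp [contractVertex_right], ?_⟩)
    simp only [contractVertex_of_ne huv ha]
    refine ⟨hab.symm, fun hau => he ?_⟩
    rw [hau]
  · simp only [contractVertex_of_ne huv ha, contractVertex_of_ne huv hb]
    exact .inl hab

theorem contractEdge_adj_iff {a b : {x : V // x ≠ v}} :
    (T.contractEdge u v).Adj a b ↔ ∃ c d, T.Adj c d ∧ s(c, d) ≠ s(u, v) ∧
      contractVertex huv c = a ∧ contractVertex huv d = b := by
  refine ⟨?_, ?_⟩
  · rintro (hab | ⟨hau, hvb, hbu⟩ | ⟨hbu, hva, hau⟩)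
    · refine ⟨a, b, hab, fun he => ?_, contractVertex_of_ne huv a.2, contractVertex_of_ne huv b.2⟩
      rcases Sym2.eq_iff.mp he with ⟨-, h⟩ | ⟨h, -⟩
      exacts [b.2 h, a.2 h]
    · refine ⟨v, b, hvb, fun he => ?_, ?_, contractVertex_of_ne huv b.2⟩
      · rcases Sym2.eq_iff.mp he with ⟨h, -⟩ | ⟨-, h⟩
        exacts [huv h.symm, hbu h]
      · rw [contractVertex_right]; exact Subtype.ext hau.symm
    · refine ⟨a, v, hva.symm, fun he => ?_, contractVertex_of_ne huv a.2, ?_⟩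
      · rcases Sym2.eq_iff.mp he with ⟨h, -⟩ | ⟨-, h⟩
        exacts [hau h, huv h.symm]
      · rw [contractVertex_right]; exact Subtype.ext hbu.symm
  · rintro ⟨c, d, hcd, he, rfl, rfl⟩
    exact contractEdge_adj_contractVertex huv hcd he

theorem edgeSet_contractEdge :
    (T.contractEdge u v).edgeSet = Sym2.map (contractVertex huv) '' (T.edgeSet \ {s(u, v)}) := by
  ext e
  induction e using Sym2.ind with
  | _ a b =>
  simp only [mem_edgeSet, contractEdge_adj_iff huv, Set.mem_image, Set.mem_sdiff,
    Set.mem_singleton_iff, Sym2.exists, Sym2.map_mk]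
  constructor
  · rintro ⟨c, d, hcd, he, rfl, rfl⟩
    exact ⟨c, d, ⟨hcd, he⟩, rfl⟩
  · rintro ⟨c, d, ⟨hcd, he⟩, h⟩
    rcases Sym2.eq_iff.mp h with ⟨hc, hd⟩ | ⟨hc, hd⟩
    · exact ⟨c, d, hcd, he, hc, hd⟩
    · exact ⟨d, c, hcd.symm, by rwa [Sym2.eq_swap], hd, hc⟩

open Classical in
noncomputable def Dart.contract (d : T.Dart) : Option (T.contractEdge u v).Dart :=
  if he : d.edge = s(u, v) then none
  else some ⟨(contractVertex huv d.fst, contractVertex huv d.snd),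
    contractEdge_adj_contractVertex huv d.adj he⟩

theorem Dart.contract_eq_none_iff {d : T.Dart} : d.contract huv = none ↔ d.edge = s(u, v) := by
  unfold Dart.contract
  split_ifs <;> simpa

theorem Dart.contract_eq_some {d : T.Dart} {d' : (T.contractEdge u v).Dart}
    (h : d.contract huv = some d') : d.edge ≠ s(u, v) ∧
      d'.fst = contractVertex huv d.fst ∧ d'.snd = contractVertex huv d.snd := by
  unfold Dart.contract at h
  split_ifs at h with he
  cases h
  exact ⟨he, rfl, rfl⟩

open Classical in
noncomputable def Walk.contract : ∀ {a b : V}, T.Walk a b →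
    (T.contractEdge u v).Walk (contractVertex huv a) (contractVertex huv b)
  | _, _, .nil => .nil
  | a, _, .cons (v := c) h p =>
    if he : s(a, c) = s(u, v) then
      p.contract.copy (contractVertex_eq_of_edge_eq huv he).symm rfl
    else .cons (contractEdge_adj_contractVertex huv h he) p.contract

theorem Walk.darts_contract {a b : V} (p : T.Walk a b) :
    (p.contract huv).darts = p.darts.filterMap (Dart.contract huv) := by
  induction p with
  | nil => rfl
  | cons h p ih =>
    unfold Walk.contract
    split_ifs with he
    · rw [darts_copy, ih, darts_cons, List.filterMap_cons_none
        ((Dart.contract_eq_none_iff huv (d := ⟨(_, _), h⟩)).mpr he)]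
    · rw [darts_cons, ih, darts_cons, List.filterMap_cons_some]
      simp [Dart.contract, he]

end Contraction

theorem IsAcyclic.injOn_map_contractVertex (hT : T.IsAcyclic) (huv : T.Adj u v) :
    Set.InjOn (Sym2.map (contractVertex huv.ne)) (T.edgeSet \ {s(u, v)}) := by
  have hvu : ∀ x, T.Adj u x → ¬T.Adj v x := fun x hux hvx =>
    hT.not_adj_of_adj_of_adj hux hvx.symm huv
  intro e he e' he' h
  induction e using Sym2.ind with | _ a b =>
  induction e' using Sym2.ind with | _ c d =>
  simp only [Set.mem_sdiff, mem_edgeSet, Set.mem_singleton_iff, Sym2.eq_iff] at he he'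
  simp only [Sym2.map_mk, Sym2.eq_iff, contractVertex_eq_iff] at h ⊢
  grind [T.loopless.irrefl, T.symm.symm]

theorem IsTree.contractEdge [Finite V] (hT : T.IsTree) (huv : T.Adj u v) :
    (T.contractEdge u v).IsTree := by
  rw [isTree_iff_connected_and_card]
  have : Nonempty T.edgeSet := ⟨⟨s(u, v), huv⟩⟩
  have := Nat.card_pos (α := T.edgeSet)
  have := (isTree_iff_connected_and_card.mp hT).2
  refine ⟨?_, ?_⟩
  · have : Nonempty {x : V // x ≠ v} := ⟨⟨u, huv.ne⟩⟩
    refine Connected.mk fun a b => ?_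
    obtain ⟨p⟩ := hT.connected.preconnected a b
    simpa only [contractVertex_of_ne huv.ne a.2, contractVertex_of_ne huv.ne b.2] using
      (p.contract huv.ne).reachable
  · rw [Nat.card_coe_set_eq, edgeSet_contractEdge huv.ne,
      (hT.isAcyclic.injOn_map_contractVertex huv).ncard_image,
      Set.ncard_sdiff_singleton_of_mem (s := T.edgeSet) huv, ← Nat.card_coe_set_eq]
    have : Nat.card {x : V // x ≠ v} = Nat.card V - 1 := by
      have := Fintype.ofFinite V
      classical
      simp [Nat.card_eq_fintype_card]
    omega

theorem IsAcyclic.isLeaf_contractEdge_iff (hT : T.IsAcyclic) (huv : T.Adj u v) {l : V} (hlu : l ≠ u)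
    (hlv : l ≠ v) : IsLeaf (T.contractEdge u v) ⟨l, hlv⟩ ↔ IsLeaf T l := by
  have hnbhd : (T.contractEdge u v).neighborSet ⟨l, hlv⟩ =
      contractVertex huv.ne '' T.neighborSet l := by
    ext b
    simp only [mem_neighborSet, contractEdge_adj_iff huv.ne, Set.mem_image]
    constructor
    · rintro ⟨c, d, hcd, -, hc, rfl⟩
      obtain rfl : c = l := by
        rw [← contractVertex_of_ne huv.ne hlv, contractVertex_eq_iff] at hc
        grind
      exact ⟨d, hcd, rfl⟩
    · rintro ⟨d, hld, rfl⟩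
      refine ⟨l, d, hld, fun he => ?_, contractVertex_of_ne huv.ne hlv, rfl⟩
      rcases Sym2.eq_iff.mp he with ⟨h, -⟩ | ⟨h, -⟩
      exacts [hlu h, hlv h]
  have hinj : Set.InjOn (contractVertex huv.ne) (T.neighborSet l) := by
    intro c hc d hd hcd
    have : T.Adj l u → ¬T.Adj l v := fun hu hv => hT.not_adj_of_adj_of_adj hu.symm hv huv
    rw [contractVertex_eq_iff] at hcd
    simp only [mem_neighborSet] at hc hd
    grind [T.symm.symm]
  rw [isLeaf_iff_ncard_neighborSet, isLeaf_iff_ncard_neighborSet, hnbhd, hinj.ncard_image]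

theorem IsAcyclic.not_isLeaf_contractEdge (hT : T.IsAcyclic) (huv : T.Adj u v) (hu : ¬IsLeaf T u)
    (hv : ¬IsLeaf T v) : ¬IsLeaf (T.contractEdge u v) ⟨u, huv.ne⟩ := by
  obtain ⟨w, huw, hwv⟩ := exists_adj_ne_of_not_isLeaf_s5 hu huv
  obtain ⟨w', hvw', hw'u⟩ := exists_adj_ne_of_not_isLeaf_s5 hv huv.symm
  rintro ⟨x, -, hx⟩
  have h1 : (⟨w, hwv⟩ : {x : V // x ≠ v}) = x := hx _ (.inl huw)
  have h2 : (⟨w', hvw'.ne'⟩ : {x : V // x ≠ v}) = x := hx _ (.inr (.inl ⟨rfl, hvw', hw'u⟩))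
  obtain rfl : w = w' := congrArg Subtype.val (h1.trans h2.symm)
  exact hT.not_adj_of_adj_of_adj huw hvw'.symm huv

theorem Walk.IsPath.isChain_darts_contract_iff (huv : T.Adj u v)
    {S : V → V → V → Prop} {S' : {x : V // x ≠ v} → {x : V // x ≠ v} → {x : V // x ≠ v} → Prop}
    (hS : ∀ {a x b}, T.Adj a x → T.Adj x b → a ≠ b → s(a, x) ≠ s(u, v) → s(x, b) ≠ s(u, v) →
      (S a x b ↔ S' (contractVertex huv.ne a) (contractVertex huv.ne x) (contractVertex huv.ne b)))
    (hS₂ : ∀ {a x y b}, s(x, y) = s(u, v) → T.Adj a x → T.Adj y b → a ≠ y → x ≠ b →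
      (S a x y ∧ S x y b ↔
        S' (contractVertex huv.ne a) (contractVertex huv.ne x) (contractVertex huv.ne b)))
    {a b : V} {p : T.Walk a b} (hp : p.IsPath) (ha : a ≠ u ∧ a ≠ v) (hb : b ≠ u ∧ b ≠ v) :
    p.darts.IsChain (fun d d' => S d.fst d.snd d'.snd) ↔
      (p.contract huv.ne).darts.IsChain (fun d d' => S' d.fst d.snd d'.snd) := by
  have hend : ∀ {x y : V}, x ≠ u ∧ x ≠ v → s(x, y) ≠ s(u, v) ∧ s(y, x) ≠ s(u, v) := by
    rintro x y ⟨hxu, hxv⟩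
    constructor <;> intro h <;> rcases Sym2.eq_iff.mp h with ⟨h, -⟩ | ⟨h, -⟩ | ⟨-, h⟩ <;>
      simp_all
  rw [Walk.darts_contract]
  refine List.isChain_filterMap_iff ?_ ?_ ?_ hp.isChain_darts ?_ ?_
  · rintro ⟨⟨a, x⟩, hax⟩ ⟨⟨x', b⟩, hxb⟩ ⟨rfl : x = x', hab⟩ hd hd'
    simp only [Dart.contract_eq_none_iff, Dart.edge_mk] at hd hd' hab
    rw [← hd', Sym2.eq_swap, Sym2.congr_right] at hd
    exact hab hd
  · rintro ⟨⟨a, x⟩, hax⟩ ⟨⟨x', b⟩, hxb⟩ d d' ⟨rfl : x = x', hab⟩ hd hd'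
    obtain ⟨hax', hd₁, hd₂⟩ := Dart.contract_eq_some huv.ne hd
    obtain ⟨hxb', -, hd'₂⟩ := Dart.contract_eq_some huv.ne hd'
    simp only [Dart.edge_mk] at hax' hxb' hab hd₁ hd₂ hd'₂ ⊢
    rw [hd₁, hd₂, hd'₂]
    exact hS hax hxb hab hax' hxb'
  · rintro ⟨⟨a, x⟩, hax⟩ ⟨⟨x', y⟩, hxy⟩ ⟨⟨y', b⟩, hyb⟩ d d'
      ⟨rfl : x = x', hay⟩ ⟨rfl : y = y', hxb⟩ hd hdxy hd'
    obtain ⟨-, hd₁, hd₂⟩ := Dart.contract_eq_some huv.ne hd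
    obtain ⟨-, -, hd'₂⟩ := Dart.contract_eq_some huv.ne hd'
    simp only [Dart.contract_eq_none_iff, Dart.edge_mk] at hdxy hay hxb hd₁ hd₂ hd'₂ ⊢
    rw [hd₁, hd₂, hd'₂]
    exact hS₂ hdxy hax hyb hay hxb
  · intro d hd
    rw [Ne, Dart.contract_eq_none_iff, Dart.edge, p.fst_of_mem_head?_darts d hd]
    exact (hend ha).1
  · intro d hd
    rw [Ne, Dart.contract_eq_none_iff, Dart.edge, p.snd_of_mem_getLast?_darts d hd]
    exact (hend hb).2

theorem Walk.IsPath.contract (hT : T.IsAcyclic) (hT' : (T.contractEdge u v).IsAcyclic)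
    (huv : T.Adj u v) {a b : V} {p : T.Walk a b} (hp : p.IsPath) (ha : a ≠ u ∧ a ≠ v)
    (hb : b ≠ u ∧ b ≠ v) :
    (p.contract huv.ne).IsPath := by
  rw [hT'.isPath_iff_isChain_darts]
  refine (hp.isChain_darts_contract_iff huv (S := fun a _ b => a ≠ b)
    (S' := fun a _ b => a ≠ b) ?_ ?_ ha hb).mp ((hT.isPath_iff_isChain_darts p).mp hp)
  · intro a x b hax hxb hab _ _
    rw [Ne, Ne, contractVertex_eq_iff]
    grind [T.symm.symm, hT.not_adj_of_adj_of_adj]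
  · intro a x y b hxy hax hyb hay hxb
    rw [Ne, Ne, Ne, contractVertex_eq_iff]
    rw [Sym2.eq_iff] at hxy
    grind [T.symm.symm, T.loopless.irrefl, hT.not_adj_of_adj_of_adj]

end SimpleGraph

section Join

variable {T : SimpleGraph V} {u v : V} (huv : T.Adj u v)
  {F : ∀ w : V, SimpleGraph (T.neighborSet w)}
  {F' : ∀ w : {x : V // x ≠ v}, SimpleGraph ((T.contractEdge u v).neighborSet w)}

variable (F F') in
structure IsJoin : Prop where
  turn_iff {a x b : V} : T.Adj a x → T.Adj x b → a ≠ b → s(a, x) ≠ s(u, v) →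
    s(x, b) ≠ s(u, v) → (Turn T F a x b ↔ Turn (T.contractEdge u v) F'
      (contractVertex huv.ne a) (contractVertex huv.ne x) (contractVertex huv.ne b))
  turn_turn_iff {a x y b : V} : s(x, y) = s(u, v) → T.Adj a x → T.Adj y b → a ≠ y → x ≠ b →
    (Turn T F a x y ∧ Turn T F x y b ↔ Turn (T.contractEdge u v) F'
      (contractVertex huv.ne a) (contractVertex huv.ne x) (contractVertex huv.ne b))

theorem turn_contractEdge_iff (hT : T.IsAcyclic)
    (hF1 : ∀ (w : {x : V // x ≠ v}), (w : V) ≠ u → ∀ (a b : (T.contractEdge u v).neighborSet w)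
        (ha : T.Adj ↑w a.1.1) (hb : T.Adj ↑w b.1.1),
        ((F' w).Adj a b ↔ (F ↑w).Adj ⟨a.1.1, ha⟩ ⟨b.1.1, hb⟩))
    (hF2 : ∀ (w : {x : V // x ≠ v}), (w : V) ≠ u → ∀ (a b : (T.contractEdge u v).neighborSet w)
        (ha : T.Adj ↑w a.1.1) (_hb : ¬ T.Adj ↑w b.1.1) (hwv : T.Adj ↑w v),
        ((F' w).Adj a b ↔ (F ↑w).Adj ⟨a.1.1, ha⟩ ⟨v, hwv⟩))
    (hJ1 : ∀ (a b : (T.contractEdge u v).neighborSet ⟨u, huv.ne⟩)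
        (ha : T.Adj u a.1.1) (hb : T.Adj u b.1.1),
        ((F' ⟨u, huv.ne⟩).Adj a b ↔ (F u).Adj ⟨a.1.1, ha⟩ ⟨b.1.1, hb⟩))
    (hJ2 : ∀ (a b : (T.contractEdge u v).neighborSet ⟨u, huv.ne⟩)
        (ha : T.Adj v a.1.1) (hb : T.Adj v b.1.1),
        ((F' ⟨u, huv.ne⟩).Adj a b ↔ (F v).Adj ⟨a.1.1, ha⟩ ⟨b.1.1, hb⟩))
    {a x b : V} (hax : T.Adj a x) (hxb : T.Adj x b) (hab : a ≠ b) (hax' : s(a, x) ≠ s(u, v))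
    (hxb' : s(x, b) ≠ s(u, v)) :
    Turn T F a x b ↔ Turn (T.contractEdge u v) F'
      (contractVertex huv.ne a) (contractVertex huv.ne x) (contractVertex huv.ne b) := by
  by_cases hxu : x = u
  · subst x
    have hav : a ≠ v := by rintro rfl; exact hax' Sym2.eq_swap
    have hbv : b ≠ v := by rintro rfl; exact hxb' rfl
    rw [contractVertex_left, contractVertex_of_ne _ hav, contractVertex_of_ne _ hbv,
      turn_iff_adj hax.symm hxb, turn_iff_adj (G := T.contractEdge u v) (.inl hax.symm) (.inl hxb)]
    exact (hJ1 ⟨⟨a, hav⟩, _⟩ ⟨⟨b, hbv⟩, _⟩ hax.symm hxb).symm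
  by_cases hxv : x = v
  · subst x
    have hau : a ≠ u := by rintro rfl; exact hax' rfl
    have hbu : b ≠ u := by rintro rfl; exact hxb' Sym2.eq_swap
    rw [contractVertex_right, contractVertex_of_ne _ hax.ne, contractVertex_of_ne _ hxb.ne',
      turn_iff_adj hax.symm hxb, turn_iff_adj (G := T.contractEdge u v)
        (.inr (.inl ⟨rfl, hax.symm, hau⟩)) (.inr (.inl ⟨rfl, hxb, hbu⟩))]
    exact (hJ2 ⟨⟨a, hax.ne⟩, _⟩ ⟨⟨b, hxb.ne'⟩, _⟩ hax.symm hxb).symm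
  wlog hav : a ≠ v generalizing a b
  · rw [turn_comm, turn_comm (x := contractVertex huv.ne x)]
    exact this hxb.symm hax.symm hab.symm (by rwa [Sym2.eq_swap]) (by rwa [Sym2.eq_swap])
      fun hbv => hab ((not_not.mp hav).trans hbv.symm)
  rw [contractVertex_of_ne _ hxv, contractVertex_of_ne _ hav, turn_iff_adj hax.symm hxb]
  by_cases hbv : b = v
  · subst b
    have hxu' : ¬T.Adj x u := fun h => hT.not_adj_of_adj_of_adj hxb huv.symm h
    rw [contractVertex_right, turn_iff_adj (G := T.contractEdge u v) (.inl hax.symm)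
      (.inr (.inr ⟨rfl, hxb.symm, hxu⟩))]
    exact (hF2 ⟨x, hxv⟩ hxu ⟨⟨a, hav⟩, _⟩ ⟨⟨u, huv.ne⟩, _⟩ hax.symm hxu' hxb).symm
  · rw [contractVertex_of_ne _ hbv,
      turn_iff_adj (G := T.contractEdge u v) (.inl hax.symm) (.inl hxb)]
    exact (hF1 ⟨x, hxv⟩ hxu ⟨⟨a, hav⟩, _⟩ ⟨⟨b, hbv⟩, _⟩ hax.symm hxb).symm

theorem turn_turn_contractEdge_iff
    (hJ3 : ∀ (a b : (T.contractEdge u v).neighborSet ⟨u, huv.ne⟩)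
        (ha : T.Adj u a.1.1) (hb : T.Adj v b.1.1),
        ((F' ⟨u, huv.ne⟩).Adj a b ↔
          ((F u).Adj ⟨a.1.1, ha⟩ ⟨v, huv⟩ ∧ (F v).Adj ⟨b.1.1, hb⟩ ⟨u, huv.symm⟩)))
    {a x y b : V} (hxy : s(x, y) = s(u, v)) (hax : T.Adj a x) (hyb : T.Adj y b) (hay : a ≠ y)
    (hxb : x ≠ b) :
    Turn T F a x y ∧ Turn T F x y b ↔ Turn (T.contractEdge u v) F'
      (contractVertex huv.ne a) (contractVertex huv.ne x) (contractVertex huv.ne b) := by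
  have key : ∀ {a b : V}, T.Adj a u → T.Adj v b → a ≠ v → u ≠ b →
      (Turn T F a u v ∧ Turn T F u v b ↔ Turn (T.contractEdge u v) F'
        (contractVertex huv.ne a) (contractVertex huv.ne u) (contractVertex huv.ne b)) := by
    intro a b hau hvb hav hub
    rw [contractVertex_left, contractVertex_of_ne _ hav, contractVertex_of_ne _ hvb.ne',
      turn_iff_adj hau.symm huv, turn_iff_adj huv.symm hvb,
      turn_iff_adj (G := T.contractEdge u v) (.inl hau.symm) (.inr (.inl ⟨rfl, hvb, hub.symm⟩)),
      (F v).adj_comm]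
    exact (hJ3 ⟨⟨a, hav⟩, _⟩ ⟨⟨b, hvb.ne'⟩, _⟩ hau.symm hvb).symm
  rcases Sym2.eq_iff.mp hxy with ⟨hxu, hyv⟩ | ⟨hxv, hyu⟩
  · subst x y
    exact key hax hyb hay hxb
  · subst x y
    rw [and_comm, turn_comm (a := v), turn_comm (a := a), key hyb.symm hax.symm hxb.symm hay.symm,
      turn_comm, contractVertex_right, contractVertex_left]

variable {huv} in
theorem IsJoin.accessible_iff [Finite V] (hT : T.IsTree) (hJ : IsJoin huv F F') {a b : V}
    (ha : a ≠ u ∧ a ≠ v) (hb : b ≠ u ∧ b ≠ v) :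
    Accessible T F a b ↔ Accessible (T.contractEdge u v) F' ⟨a, ha.2⟩ ⟨b, hb.2⟩ := by
  obtain ⟨p, hp, -⟩ := hT.existsUnique_path a b
  have hT' := (hT.contractEdge huv).isAcyclic
  let q := (p.contract huv.ne).copy (contractVertex_of_ne _ ha.2) (contractVertex_of_ne _ hb.2)
  have hq : q.IsPath := (Walk.isPath_copy _ _ _).mpr (hp.contract hT.isAcyclic hT' huv ha hb)
  rw [accessible_iff_admissible hT.isAcyclic hp, accessible_iff_admissible hT' hq,
    admissible_iff_isChain_darts, admissible_iff_isChain_darts, Walk.darts_copy]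
  exact hp.isChain_darts_contract_iff huv hJ.turn_iff hJ.turn_turn_iff ha hb

end Join

theorem stmt5_general [Fintype V]
    (T : SimpleGraph V) (hT : T.IsTree)
    (F : ∀ w : V, SimpleGraph (T.neighborSet w))
    (u v : V) (huv : T.Adj u v) (hu : ¬ IsLeaf T u) (hv : ¬ IsLeaf T v)
    (T' : SimpleGraph {x : V // x ≠ v})
    (hT' : ∀ a b : {x : V // x ≠ v}, T'.Adj a b ↔
      (T.Adj ↑a ↑b ∨ ((a : V) = u ∧ T.Adj v ↑b ∧ (b : V) ≠ u) ∨
        ((b : V) = u ∧ T.Adj v ↑a ∧ (a : V) ≠ u)))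
    (F' : ∀ w : {x : V // x ≠ v}, SimpleGraph (T'.neighborSet w))
    -- labels of the nodes distinct from the merged node are unchanged
    -- (markers corresponding to the same tree-edges; the marker formerly
    -- pointing to `v` now points to the merged node `u`):
    (hF1 : ∀ (w : {x : V // x ≠ v}), (w : V) ≠ u → ∀ (a b : T'.neighborSet w)
        (ha : T.Adj ↑w a.1.1) (hb : T.Adj ↑w b.1.1),
        ((F' w).Adj a b ↔ (F ↑w).Adj ⟨a.1.1, ha⟩ ⟨b.1.1, hb⟩))
    (hF2 : ∀ (w : {x : V // x ≠ v}), (w : V) ≠ u → ∀ (a b : T'.neighborSet w)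
        (ha : T.Adj ↑w a.1.1) (_hb : ¬ T.Adj ↑w b.1.1) (hwv : T.Adj ↑w v),
        ((F' w).Adj a b ↔ (F ↑w).Adj ⟨a.1.1, ha⟩ ⟨v, hwv⟩))
    -- label of the merged node:
    (hJ1 : ∀ (a b : T'.neighborSet ⟨u, huv.ne⟩)
        (ha : T.Adj u a.1.1) (hb : T.Adj u b.1.1),
        ((F' ⟨u, huv.ne⟩).Adj a b ↔ (F u).Adj ⟨a.1.1, ha⟩ ⟨b.1.1, hb⟩))
    (hJ2 : ∀ (a b : T'.neighborSet ⟨u, huv.ne⟩)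
        (ha : T.Adj v a.1.1) (hb : T.Adj v b.1.1),
        ((F' ⟨u, huv.ne⟩).Adj a b ↔ (F v).Adj ⟨a.1.1, ha⟩ ⟨b.1.1, hb⟩))
    (hJ3 : ∀ (a b : T'.neighborSet ⟨u, huv.ne⟩)
        (ha : T.Adj u a.1.1) (hb : T.Adj v b.1.1),
        ((F' ⟨u, huv.ne⟩).Adj a b ↔
          ((F u).Adj ⟨a.1.1, ha⟩ ⟨v, huv⟩ ∧ (F v).Adj ⟨b.1.1, hb⟩ ⟨u, huv.symm⟩))) :
    (∀ l : {x : V // x ≠ v}, IsLeaf T ↑l ↔ IsLeaf T' l) ∧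
    (∀ l l' : {x : V // x ≠ v}, IsLeaf T ↑l → IsLeaf T ↑l' →
      (Accessible T F ↑l ↑l' ↔ Accessible T' F' l l')) := by
  obtain rfl : T' = T.contractEdge u v := by ext a b; exact hT' a b
  have hJ : IsJoin huv F F' := ⟨turn_contractEdge_iff huv hT.isAcyclic hF1 hF2 hJ1 hJ2,
    turn_turn_contractEdge_iff huv hJ3⟩
  have hne : ∀ l : {x : V // x ≠ v}, IsLeaf T l → (l : V) ≠ u := fun l hl hlu => hu (hlu ▸ hl)
  refine ⟨fun ⟨l, hlv⟩ => ?_, fun l l' hl hl' =>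
    hJ.accessible_iff hT ⟨hne l hl, l.2⟩ ⟨hne l' hl', l'.2⟩⟩
  by_cases hlu : l = u
  · subst hlu
    exact iff_of_false hu (hT.isAcyclic.not_isLeaf_contractEdge huv hu hv)
  · exact (hT.isAcyclic.isLeaf_contractEdge_iff huv hlu hlv).symm

/-- the join operation on a tree-edge `uv` of a graph-labelled tree
(merging the nodes `u` and `v` into a single node whose label is obtained from
`G_u` and `G_v` by deleting the two markers of the edge `uv` and joining the
neighbourhood of the marker of `uv` in `G_u` with its neighbourhood in `G_v`)
does not change the accessibility graph.  Here `T'` is the tree after the join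
(on the vertex set `V \ {v}`, the merged node being `u`), and `F'` its labels,
described by the hypotheses; the conclusion states that the leaves and the
accessibility relation between leaves are unchanged, i.e. `G(T,F) = G(T',F')`. -/
theorem stmt5 [Fintype V] [DecidableEq V]
    (T : SimpleGraph V) (hT : T.IsTree)
    (F : ∀ w : V, SimpleGraph (T.neighborSet w))
    (u v : V) (huv : T.Adj u v) (hu : ¬ IsLeaf T u) (hv : ¬ IsLeaf T v)
    (T' : SimpleGraph {x : V // x ≠ v})
    (hT' : ∀ a b : {x : V // x ≠ v}, T'.Adj a b ↔
      (T.Adj ↑a ↑b ∨ ((a : V) = u ∧ T.Adj v ↑b ∧ (b : V) ≠ u) ∨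
        ((b : V) = u ∧ T.Adj v ↑a ∧ (a : V) ≠ u)))
    (F' : ∀ w : {x : V // x ≠ v}, SimpleGraph (T'.neighborSet w))
    -- labels of the nodes distinct from the merged node are unchanged
    -- (markers corresponding to the same tree-edges; the marker formerly
    -- pointing to `v` now points to the merged node `u`):
    (hF1 : ∀ (w : {x : V // x ≠ v}), (w : V) ≠ u → ∀ (a b : T'.neighborSet w)
        (ha : T.Adj ↑w a.1.1) (hb : T.Adj ↑w b.1.1),
        ((F' w).Adj a b ↔ (F ↑w).Adj ⟨a.1.1, ha⟩ ⟨b.1.1, hb⟩))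
    (hF2 : ∀ (w : {x : V // x ≠ v}), (w : V) ≠ u → ∀ (a b : T'.neighborSet w)
        (ha : T.Adj ↑w a.1.1) (_hb : ¬ T.Adj ↑w b.1.1) (hwv : T.Adj ↑w v),
        ((F' w).Adj a b ↔ (F ↑w).Adj ⟨a.1.1, ha⟩ ⟨v, hwv⟩))
    (hF3 : ∀ (w : {x : V // x ≠ v}), (w : V) ≠ u → ∀ (a b : T'.neighborSet w)
        (_ha : ¬ T.Adj ↑w a.1.1) (hb : T.Adj ↑w b.1.1) (hwv : T.Adj ↑w v),
        ((F' w).Adj a b ↔ (F ↑w).Adj ⟨v, hwv⟩ ⟨b.1.1, hb⟩))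
    -- label of the merged node:
    (hJ1 : ∀ (a b : T'.neighborSet ⟨u, huv.ne⟩)
        (ha : T.Adj u a.1.1) (hb : T.Adj u b.1.1),
        ((F' ⟨u, huv.ne⟩).Adj a b ↔ (F u).Adj ⟨a.1.1, ha⟩ ⟨b.1.1, hb⟩))
    (hJ2 : ∀ (a b : T'.neighborSet ⟨u, huv.ne⟩)
        (ha : T.Adj v a.1.1) (hb : T.Adj v b.1.1),
        ((F' ⟨u, huv.ne⟩).Adj a b ↔ (F v).Adj ⟨a.1.1, ha⟩ ⟨b.1.1, hb⟩))
    (hJ3 : ∀ (a b : T'.neighborSet ⟨u, huv.ne⟩)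
        (ha : T.Adj u a.1.1) (hb : T.Adj v b.1.1),
        ((F' ⟨u, huv.ne⟩).Adj a b ↔
          ((F u).Adj ⟨a.1.1, ha⟩ ⟨v, huv⟩ ∧ (F v).Adj ⟨b.1.1, hb⟩ ⟨u, huv.symm⟩)))
    (hJ4 : ∀ (a b : T'.neighborSet ⟨u, huv.ne⟩)
        (ha : T.Adj v a.1.1) (hb : T.Adj u b.1.1),
        ((F' ⟨u, huv.ne⟩).Adj a b ↔
          ((F v).Adj ⟨a.1.1, ha⟩ ⟨u, huv.symm⟩ ∧ (F u).Adj ⟨b.1.1, hb⟩ ⟨v, huv⟩))) :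
    (∀ l : {x : V // x ≠ v}, IsLeaf T ↑l ↔ IsLeaf T' l) ∧
    (∀ l l' : {x : V // x ≠ v}, IsLeaf T ↑l → IsLeaf T ↑l' →
      (Accessible T F ↑l ↑l' ↔ Accessible T' F' l l')) :=
  stmt5_general T hT F u v huv hu hv T' hT' F' hF1 hF2 hJ1 hJ2 hJ3
end

section
/- Let T be a tree equipped with compatible local orientations, i.e. a function f from nodes of T to nodes of T such that (i) for every node u, f(u) = u or f(u) is a neighbour of u, (ii) if f(u) = u then f(v) = u for every neighbour v of u, and (iii) if f(u) = v with v ≠ u, then f(w) = u for every neighbour w of u with w ≠ v. Then exactly one of the following holds: either there is a unique node u with f(u) = u, or there is a unique edge uv of T with f(u) = v and f(v) = u. -/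
/-!
Merge conditions (ii) and (iii) into: every neighbour `w ≠ f u` of `u` points to `u`. If
`f (f r) = r`, an induction on the distance to `r` shows that every vertex `x` with
`dist x r ≤ dist x (f r)`, other than `r`, points to its neighbour one step closer to `r`; so
`x ↦ min (dist x r) (dist x (f r))` strictly decreases along `f` outside `{r, f r}`, and the
`f`-orbits of period at most two are exactly `{r}` or the edge `{r, f r}`. Such an `r` exists:
otherwise no vertex is fixed, and `u ↦ s(u, f u)` would map the `n` vertices injectively into the
`n - 1` edges of the tree.
-/

open SimpleGraph

namespace SimpleGraph

variable {V : Type*} {G : SimpleGraph V}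

lemma Connected.exists_adj_dist_add_one_eq (hG : G.Connected) {x r : V} (hx : x ≠ r) :
    ∃ y, G.Adj x y ∧ G.dist y r + 1 = G.dist x r := by
  obtain ⟨p, hp⟩ := hG.exists_walk_length_eq_dist x r
  cases p with
  | nil => exact absurd rfl hx
  | @cons _ y _ hxy q =>
    have hq : G.dist y r ≤ q.length := dist_le q
    have htri : G.dist x r ≤ G.dist x y + G.dist y r := hG.dist_triangle
    rw [Walk.length_cons] at hp
    rw [dist_eq_one_iff_adj.mpr hxy] at htri
    exact ⟨y, hxy, by omega⟩

section Orientation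

variable {f : V → V} (hG : G.Connected) (hf : ∀ u w, G.Adj u w → w ≠ f u → f w = u)
include hG hf

theorem dist_apply_add_one_eq {x r : V} (hxr : x ≠ r) (hside : G.dist x r ≤ G.dist x (f r)) :
    G.dist (f x) r + 1 = G.dist x r := by
  induction hn : G.dist x r using Nat.strong_induction_on generalizing x with
  | _ n ih =>
  obtain ⟨y, hxy, hy⟩ := hG.exists_adj_dist_add_one_eq hxr
  suffices f x = y by rw [this, hy, hn]
  refine hf y x hxy.symm fun hx => ?_
  by_cases hyr : y = r
  · subst hyr
    rw [← hx, dist_self] at hside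
    omega
  · have htri : G.dist x (f r) ≤ G.dist x y + G.dist y (f r) := hG.dist_triangle
    rw [dist_eq_one_iff_adj.mpr hxy] at htri
    have hfy := ih (G.dist y r) (by omega) hyr (by omega) rfl
    rw [← hx] at hfy
    omega

theorem min_dist_apply_lt {x r : V} (hr : f (f r) = r) (hxr : x ≠ r) (hxfr : x ≠ f r) :
    min (G.dist (f x) r) (G.dist (f x) (f r)) < min (G.dist x r) (G.dist x (f r)) := by
  rcases le_total (G.dist x r) (G.dist x (f r)) with h | h
  · have := dist_apply_add_one_eq hG hf hxr h
    omega
  · have := dist_apply_add_one_eq hG hf hxfr (by rwa [hr])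
    omega

theorem eq_or_eq_apply_of_apply_apply_eq {r x : V} (hr : f (f r) = r) (hx : f (f x) = x) :
    x = r ∨ x = f r := by
  by_contra! hne
  have hfxr : f x ≠ r := fun h => hne.2 (by rw [← hx, h])
  have hfxfr : f x ≠ f r := fun h => hne.1 (by rw [← hx, h, hr])
  have hlt := min_dist_apply_lt hG hf hr hne.1 hne.2
  have hlt' := min_dist_apply_lt hG hf hr hfxr hfxfr
  rw [hx] at hlt'
  omega

end Orientation

theorem IsTree.exists_apply_apply_eq [Finite V] (hT : G.IsTree) {f : V → V}
    (hf : ∀ u, f u = u ∨ G.Adj u (f u)) : ∃ u, f (f u) = u := by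
  classical
  have := Fintype.ofFinite V
  by_contra! h
  have hadj : ∀ u, G.Adj u (f u) := fun u =>
    (hf u).resolve_left fun hu => h u (by rw [hu, hu])
  have hcard : Fintype.card G.edgeSet < Fintype.card V := by
    rw [← hT.card_edgeFinset, ← edgeFinset_card]
    omega
  obtain ⟨u, v, huv, hs⟩ := Fintype.exists_ne_map_eq_of_card_lt
    (fun u => (⟨s(u, f u), hadj u⟩ : G.edgeSet)) hcard
  rcases Sym2.eq_iff.mp (Subtype.ext_iff.mp hs) with ⟨rfl, -⟩ | ⟨rfl, hv⟩
  · exact huv rfl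
  · exact h v hv

end SimpleGraph

/-- a tree with compatible local orientations has either a unique
node-root (a node `u` with `f u = u`) or a unique edge-root (an edge `uv` with
`f u = v` and `f v = u`), but not both. -/
theorem stmt7 (V : Type) [Fintype V] (T : SimpleGraph V) (hT : T.IsTree)
    (f : V → V)
    (h0 : ∀ u, f u = u ∨ T.Adj u (f u))
    (h1 : ∀ u, f u = u → ∀ w, T.Adj u w → f w = u)
    (h2 : ∀ u w₀, f u = w₀ → w₀ ≠ u → ∀ w, T.Adj u w → w ≠ w₀ → f w = u) :
    Xor' (∃! r : V, f r = r)
      (∃! e : Sym2 V, ∃ a b : V, e = s(a, b) ∧ T.Adj a b ∧ f a = b ∧ f b = a) := by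
  have hf : ∀ u w, T.Adj u w → w ≠ f u → f w = u := fun u w huw hw =>
    (h0 u).elim (fun hu => h1 u hu w huw) (fun hadj => h2 u (f u) rfl hadj.ne' w huw hw)
  obtain ⟨r, hr⟩ := hT.exists_apply_apply_eq h0
  have hroot : ∀ x, f (f x) = x → x = r ∨ x = f r := fun x hx =>
    eq_or_eq_apply_of_apply_apply_eq hT.connected hf hr hx
  by_cases hfr : f r = r
  · refine Or.inl ⟨⟨r, hfr, fun x hx => ?_⟩, ?_⟩
    · rcases hroot x (by rw [hx, hx]) with rfl | rfl <;> simp [hfr]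
    · rintro ⟨-, ⟨a, b, -, hab, rfl, hfb⟩, -⟩
      rcases hroot a hfb with rfl | rfl <;> simp [hfr] at hab
  · refine Or.inr ⟨⟨s(r, f r), ⟨r, f r, rfl, (h0 r).resolve_left hfr, rfl, hr⟩, ?_⟩, ?_⟩
    · rintro _ ⟨a, b, rfl, -, rfl, hfb⟩
      rcases hroot a hfb with rfl | rfl
      · rfl
      · rw [hr, Sym2.eq_swap]
    · rintro ⟨x, hx, -⟩
      rcases hroot x (by rw [hx, hx]) with rfl | rfl
      · exact hfr hx
      · rw [hr] at hx
        exact hfr hx.symm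
end

section
/- Let G be the accessibility graph of a graph-labelled tree (T,F) in which every label is a complete graph or a star. Then G contains no induced path P_4 on 4 vertices if and only if there exists a clique node, or a tree-edge, of T towards which every star node of T is oriented (a star node u is oriented towards an edge/node r if the tree-edge e with ρ_u(e) the centre of the star G_u lies on the path from u towards r). -/
open SimpleGraph

variable {V : Type}

/-- A label graph is a complete graph. -/
def CompleteLabel {α : Type} (H : SimpleGraph α) : Prop := ∀ a b : α, a ≠ b → H.Adj a b

/-- A label graph is a star with centre `c`. -/
def StarLabel {α : Type} (H : SimpleGraph α) (c : α) : Prop :=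
  ∀ a b : α, H.Adj a b ↔ (a ≠ b ∧ (a = c ∨ b = c))

/-!
Write `H(v, x)` for the branch of the tree at `v` through its neighbour `x` (`InBranch`). A node
`v` lies on the path between `a` and `b` iff they lie in different branches at `v`, so that path
is admissible iff every star node separating `a` from `b` has its centre towards `a` or `b`
(`Unblocked`). Call two star nodes *away* from each other if neither has its centre towards the
other. With no away pair, the star `u` with the smallest centre branch `H(u, c)` has every star
oriented towards the edge `u c`; conversely, a clique node or an edge towards which all stars are
oriented leaves no room for an away pair. It remains to see that an induced `P₄` exists iff an
away pair does. The stars blocking the three non-edges of a `P₄` contain an away pair. Conversely,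
take an away pair `u, v` at minimal distance: then every star between them points to `u` or `v`,
and leaves chosen behind the centre and behind a third neighbour of each of `u` and `v`, each
reached by an admissible path, induce a `P₄`.
-/

namespace SimpleGraph

variable {T : SimpleGraph V} {a b c u v w x y z : V}

def InBranch (T : SimpleGraph V) (w x a : V) : Prop := (T.deleteEdges {s(w, x)}).Reachable x a

lemma Reachable.induction_on {G : SimpleGraph V} {P : V → Prop} (h : G.Reachable a b)
    (ha : P a) (step : ∀ ⦃u v⦄, G.Reachable a u → G.Adj u v → P u → P v) : P b := by
  induction (reachable_iff_reflTransGen a b).mp h with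
  | refl => exact ha
  | tail hau huv ih =>
    have hau := (reachable_iff_reflTransGen _ _).mpr hau
    exact step hau huv (ih hau)

lemma inBranch_self (w x : V) : T.InBranch w x x := Reachable.refl _

lemma inBranch_congr (hab : T.Adj a b) (hne : s(a, b) ≠ s(w, x)) :
    T.InBranch w x a ↔ T.InBranch w x b := by
  have hadj : (T.deleteEdges {s(w, x)}).Adj a b := by simpa [hab] using hne
  exact ⟨fun h => h.trans hadj.reachable, fun h => h.trans hadj.symm.reachable⟩

lemma inBranch_congr_of_ne (hab : T.Adj a b) (ha : a ≠ w) (hb : b ≠ w) :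
    T.InBranch w x a ↔ T.InBranch w x b :=
  inBranch_congr hab fun h => by
    rcases Sym2.eq_iff.mp h with ⟨h, -⟩ | ⟨-, h⟩ <;> contradiction

lemma InBranch.of_walk (hwa : T.InBranch w x a) (p : T.Walk a b) (hw : w ∉ p.support) :
    T.InBranch w x b := by
  induction p with
  | nil => exact hwa
  | cons hab q ih =>
    simp only [Walk.support_cons, List.mem_cons, not_or] at hw
    have hbw : _ ≠ w := fun h => hw.2 (h ▸ q.start_mem_support)
    exact ih ((inBranch_congr_of_ne hab (Ne.symm hw.1) hbw).mp hwa) hw.2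

lemma IsTree.not_inBranch_self (hT : T.IsTree) (hwx : T.Adj w x) : ¬ T.InBranch w x w :=
  fun h => isBridge_iff.mp (isAcyclic_iff_forall_adj_isBridge.mp hT.isAcyclic hwx) h.symm

lemma IsTree.inBranch_swap_iff (hT : T.IsTree) (hwx : T.Adj w x) :
    T.InBranch x w a ↔ ¬ T.InBranch w x a := by
  constructor
  · intro hxa hwa
    rw [InBranch, Sym2.eq_swap] at hxa
    exact hT.not_inBranch_self hwx (hwa.trans hxa.symm)
  · refine fun hwa => ((hT.connected.preconnected w a).induction_on
      (P := fun b => T.InBranch w x b ∨ T.InBranch x w b) (Or.inr (inBranch_self x w))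
      ?_).resolve_left hwa
    intro b c _ hbc hb
    by_cases he : s(b, c) = s(w, x)
    · rcases Sym2.eq_iff.mp he with ⟨rfl, rfl⟩ | ⟨rfl, rfl⟩
      exacts [Or.inl (inBranch_self _ _), Or.inr (inBranch_self _ _)]
    · have he' : s(b, c) ≠ s(x, w) := by rwa [Sym2.eq_swap (a := x)]
      rwa [inBranch_congr hbc he, inBranch_congr hbc he'] at hb

lemma IsTree.exists_inBranch (hT : T.IsTree) (hva : v ≠ a) :
    ∃ x, T.Adj v x ∧ T.InBranch v x a := by
  obtain ⟨p, hp, -⟩ := hT.existsUnique_path v a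
  cases p with
  | nil => exact absurd rfl hva
  | cons hvx q =>
    exact ⟨_, hvx, (inBranch_self v _).of_walk q ((Walk.cons_isPath_iff _ _).mp hp).2⟩

lemma inBranch_disjoint (hux : T.Adj u x) (hvy : T.Adj v y) (hne : s(u, x) ≠ s(v, y))
    (hv : ¬ T.InBranch u x v) (hu : ¬ T.InBranch v y u) (ha : T.InBranch u x a) :
    ¬ T.InBranch v y a := by
  refine ha.induction_on (P := fun b => ¬ T.InBranch v y b)
    (fun h => hu ((inBranch_congr hux hne).mpr h)) ?_
  intro b c hb hbc hbv hcv
  by_cases he : s(b, c) = s(v, y)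
  · rcases Sym2.eq_iff.mp he with ⟨rfl, -⟩ | ⟨-, rfl⟩
    exacts [hv hb, hv (hb.trans hbc.reachable)]
  · exact hbv ((inBranch_congr (deleteEdges_adj.mp hbc).1 he).mpr hcv)

lemma IsTree.inBranch_unique (hT : T.IsTree) (hvx : T.Adj v x) (hvy : T.Adj v y)
    (hx : T.InBranch v x a) (hy : T.InBranch v y a) : x = y := by
  by_contra hxy
  refine inBranch_disjoint hvx hvy (fun h => hxy ?_) (hT.not_inBranch_self hvx)
    (hT.not_inBranch_self hvy) hx hy
  rcases Sym2.eq_iff.mp h with ⟨-, h⟩ | ⟨-, h⟩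
  exacts [h, (hvx.ne h.symm).elim]

lemma IsTree.inBranch_mono (hT : T.IsTree) (hvx : T.Adj v x) (hwy : T.Adj w y)
    (hw : T.InBranch v x w) (hv : ¬ T.InBranch w y v) (ha : T.InBranch w y a) :
    T.InBranch v x a := by
  have hne : s(w, y) ≠ s(x, v) := by
    intro he
    rcases Sym2.eq_iff.mp he with ⟨rfl, rfl⟩ | ⟨rfl, rfl⟩
    exacts [hv (inBranch_self _ _), hT.not_inBranch_self hvx hw]
  have hx : ¬ T.InBranch w y x := fun h =>
    hv ((inBranch_congr hvx.symm (Ne.symm hne)).mp h)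
  rw [hT.inBranch_swap_iff hvx.symm]
  exact inBranch_disjoint hwy hvx.symm hne hx (by rwa [hT.inBranch_swap_iff hvx, not_not]) ha

def SameBranch (T : SimpleGraph V) (v a b : V) : Prop :=
  ∃ x, T.Adj v x ∧ T.InBranch v x a ∧ T.InBranch v x b

lemma SameBranch.symm (h : T.SameBranch v a b) : T.SameBranch v b a :=
  let ⟨x, hvx, ha, hb⟩ := h; ⟨x, hvx, hb, ha⟩

lemma IsTree.inBranch_of_sameBranch (hT : T.IsTree) (hvc : T.Adj v c) (h : T.SameBranch v a b)
    (ha : T.InBranch v c a) : T.InBranch v c b := by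
  obtain ⟨x, hvx, hxa, hxb⟩ := h
  rwa [hT.inBranch_unique hvc hvx ha hxa]

lemma IsTree.sameBranch_trans (hT : T.IsTree) (hab : T.SameBranch v a b)
    (hbc : T.SameBranch v b c) : T.SameBranch v a c :=
  let ⟨x, hvx, hxa, hxb⟩ := hab; ⟨x, hvx, hxa, hT.inBranch_of_sameBranch hvx hbc hxb⟩

lemma IsTree.sameBranch_of_adj (hT : T.IsTree) (hab : T.Adj a b) (hva : v ≠ a) (hvb : v ≠ b) :
    T.SameBranch v a b := by
  obtain ⟨x, hvx, ha⟩ := hT.exists_inBranch hva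
  exact ⟨x, hvx, ha, (inBranch_congr_of_ne hab hva.symm hvb.symm).mp ha⟩

lemma IsTree.sameBranch_of_inBranch (hT : T.IsTree) (hvx : T.Adj v x) (hzv : z ≠ v)
    (hz : ¬ T.InBranch v x z) (ha : T.InBranch v x a) : T.SameBranch z v a := by
  obtain ⟨y, hzy, hv⟩ := hT.exists_inBranch hzv
  exact ⟨y, hzy, hv, hT.inBranch_mono hzy hvx hv hz ha⟩

lemma IsTree.sameBranch_of_not_inBranch (hT : T.IsTree) (hvx : T.Adj v x)
    (hz : T.InBranch v x z) (hb : ¬ T.InBranch v x b) : T.SameBranch z v b := by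
  have hzv : z ≠ v := fun h => hT.not_inBranch_self hvx (h ▸ hz)
  obtain ⟨y, hzy, hv⟩ := hT.exists_inBranch hzv
  obtain ⟨y', hzy', hb'⟩ := hT.exists_inBranch (a := b) fun h => hb (h ▸ hz)
  obtain rfl | hyy := eq_or_ne y' y
  · exact ⟨y', hzy', hv, hb'⟩
  · have hvy' : ¬ T.InBranch z y' v := fun h => hyy (hT.inBranch_unique hzy' hzy h hv)
    exact (hb (hT.inBranch_mono hvx hzy' hz hvy' hb')).elim

lemma IsTree.sameBranch_of_not_mem_support (hT : T.IsTree) (p : T.Walk a b)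
    (hz : z ∉ p.support) : T.SameBranch z a b := by
  obtain ⟨x, hzx, ha⟩ := hT.exists_inBranch (ne_of_mem_of_not_mem p.start_mem_support hz).symm
  exact ⟨x, hzx, ha, ha.of_walk p hz⟩

lemma IsTree.not_sameBranch_of_mem_support (hT : T.IsTree) {p : T.Walk a b} (hp : p.IsPath)
    (hz : z ∈ p.support) : ¬ T.SameBranch z a b := by
  classical
  rintro ⟨x, hzx, ha, hb⟩
  obtain ⟨q⟩ := ha.symm.trans hb
  have hq : z ∉ q.support := fun hzq =>
    hT.not_inBranch_self hzx (ha.trans (q.takeUntil z hzq).reachable)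
  have hpq : (⟨p, hp⟩ : T.Path a b) = (q.mapLe (deleteEdges_le _)).toPath :=
    (hT.isAcyclic.subsingleton_path a b).elim _ _
  rw [show p = _ from congrArg Subtype.val hpq] at hz
  have := Walk.support_toPath_subset_support _ hz
  rw [Walk.support_mapLe_eq_support] at this
  exact hq this

lemma IsTree.dist_lt_of_not_sameBranch (hT : T.IsTree) (hzv : z ≠ v)
    (h : ¬ T.SameBranch z u v) : T.dist u z < T.dist u v := by
  classical
  obtain ⟨p, hp⟩ := hT.connected.exists_walk_length_eq_dist u v
  have hz : z ∈ p.support := by_contra fun hz => h (hT.sameBranch_of_not_mem_support p hz)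
  calc T.dist u z ≤ (p.takeUntil z hz).length := dist_le _
    _ < p.length := Walk.length_takeUntil_lt_length hz hzv
    _ = T.dist u v := hp

lemma IsTree.not_reachable_deleteEdges_iff (hT : T.IsTree) (hwx : T.Adj w x) :
    ¬ (T.deleteEdges {s(w, x)}).Reachable w a ↔ T.InBranch w x a := by
  rw [Sym2.eq_swap, ← not_iff_not, not_not]
  exact hT.inBranch_swap_iff hwx

lemma exists_adj_ne_ne (h : 3 ≤ (T.neighborSet w).ncard) (a b : V) :
    ∃ t, T.Adj w t ∧ t ≠ a ∧ t ≠ b := by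
  have hab := Set.ncard_insert_le a {b}
  rw [Set.ncard_singleton] at hab
  obtain ⟨t, ht, htab⟩ :=
    Set.exists_mem_notMem_of_ncard_lt_ncard (s := {a, b}) (t := T.neighborSet w) (by omega)
  simp only [Set.mem_insert_iff, Set.mem_singleton_iff, not_or] at htab
  exact ⟨t, ht, htab⟩

def IsInducedP4 {W : Type*} (G : SimpleGraph W) (a b c d : W) : Prop :=
  a ≠ b ∧ a ≠ c ∧ a ≠ d ∧ b ≠ c ∧ b ≠ d ∧ c ≠ d ∧
    G.Adj a b ∧ G.Adj b c ∧ G.Adj c d ∧ ¬ G.Adj a c ∧ ¬ G.Adj a d ∧ ¬ G.Adj b d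

end SimpleGraph

section CliqueStarTree

variable {T : SimpleGraph V} {F : ∀ v : V, SimpleGraph (T.neighborSet v)}
  {a b c c' cu cv cz d l u v w x y z : V}

def IsStar (T : SimpleGraph V) (F : ∀ v : V, SimpleGraph (T.neighborSet v)) (w c : V) : Prop :=
  ¬ IsLeaf T w ∧ ∃ h : T.Adj w c, StarLabel (F w) ⟨c, h⟩

lemma IsStar.adj (h : IsStar T F w c) : T.Adj w c := h.2.1

lemma IsStar.ne_of_isLeaf (h : IsStar T F w c) (hl : IsLeaf T l) : w ≠ l :=
  fun he => h.1 (he ▸ hl)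

lemma IsStar.centre_unique (hdeg : 3 ≤ (T.neighborSet w).ncard) (h : IsStar T F w c)
    (h' : IsStar T F w c') : c = c' := by
  obtain ⟨-, hwc, hst⟩ := h
  obtain ⟨-, hwc', hst'⟩ := h'
  obtain ⟨t, hwt, htc, htc'⟩ := exists_adj_ne_ne hdeg c c'
  have hadj : (F w).Adj ⟨c, hwc⟩ ⟨t, hwt⟩ :=
    (hst _ _).mpr ⟨fun he => htc (congrArg Subtype.val he).symm, Or.inl rfl⟩
  rcases ((hst' _ _).mp hadj).2 with he | he
  exacts [congrArg Subtype.val he, (htc' (congrArg Subtype.val he)).elim]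

lemma not_isLeaf_of_adj_of_adj (hxa : T.Adj x a) (hxb : T.Adj x b) (hab : a ≠ b) :
    ¬ IsLeaf T x :=
  fun ⟨_, _, h⟩ => hab ((h a hxa).trans (h b hxb).symm)

lemma label_adj_iff (hCS : ¬ IsLeaf T x → CompleteLabel (F x) ∨ ∃ c, StarLabel (F x) c)
    (hxa : T.Adj x a) (hxb : T.Adj x b) (hab : a ≠ b) :
    (F x).Adj ⟨a, hxa⟩ ⟨b, hxb⟩ ↔ ∀ c, IsStar T F x c → c = a ∨ c = b := by
  have hx := not_isLeaf_of_adj_of_adj hxa hxb hab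
  have hne : (⟨a, hxa⟩ : T.neighborSet x) ≠ ⟨b, hxb⟩ := fun he =>
    hab (congrArg Subtype.val he)
  constructor
  · rintro hadj c ⟨-, hxc, hst⟩
    rcases ((hst _ _).mp hadj).2 with he | he
    exacts [Or.inl (congrArg Subtype.val he).symm, Or.inr (congrArg Subtype.val he).symm]
  · intro hturn
    rcases hCS hx with hcl | ⟨c, hst⟩
    · exact hcl _ _ hne
    · refine (hst _ _).mpr ⟨hne, ?_⟩
      rcases hturn c ⟨hx, c.2, hst⟩ with he | he
      exacts [Or.inl (Subtype.ext he.symm), Or.inr (Subtype.ext he.symm)]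

def Unblocked (T : SimpleGraph V) (F : ∀ v : V, SimpleGraph (T.neighborSet v)) (a b : V) : Prop :=
  ∀ v c, IsStar T F v c → v ≠ a → v ≠ b → ¬ T.SameBranch v a b →
    T.InBranch v c a ∨ T.InBranch v c b

lemma Unblocked.symm (h : Unblocked T F a b) : Unblocked T F b a :=
  fun v c hv hva hvb hab => (h v c hv hvb hva fun h => hab h.symm).symm

lemma SimpleGraph.IsTree.unblocked_of_adj (hT : T.IsTree) (hab : T.Adj a b) :
    Unblocked T F a b :=
  fun _ _ _ hva hvb hs => (hs (hT.sameBranch_of_adj hab hva hvb)).elim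

lemma SimpleGraph.IsTree.unblocked_self (hT : T.IsTree) : Unblocked T F a a := by
  intro v _ _ hva _ hs
  obtain ⟨x, hvx, ha⟩ := hT.exists_inBranch hva
  exact (hs ⟨x, hvx, ha, ha⟩).elim

lemma SimpleGraph.IsTree.unblocked_of_unblocked_of_adj (hT : T.IsTree) (h : Unblocked T F a b)
    (hax : T.Adj a x) (hs : T.SameBranch a x b) : Unblocked T F x b := by
  intro z c hz hzx hzb hxb
  have hza : z ≠ a := by rintro rfl; exact hxb hs
  have hzxa := hT.sameBranch_of_adj hax.symm hzx hza
  rw [← inBranch_congr_of_ne hax hza.symm hzx.symm]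
  exact h z c hz hza hzb fun hab => hxb (hT.sameBranch_trans hzxa hab)

lemma SimpleGraph.IsTree.centre_toward_of_unblocked (hT : T.IsTree) (hvx : T.Adj v x)
    (hvy : T.Adj v y) (hxy : x ≠ y) (hva : Unblocked T F v a) (hb : T.InBranch v y b)
    (hz : IsStar T F z c) (hzx : T.InBranch v x z) (hza : z ≠ a) (hab : ¬ T.SameBranch z a b) :
    T.InBranch z c a ∨ T.InBranch z c b := by
  have hzvb := hT.sameBranch_of_not_inBranch hvx hzx fun h =>
    hxy (hT.inBranch_unique hvx hvy h hb)
  have hzv : z ≠ v := fun h => hT.not_inBranch_self hvx (h ▸ hzx)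
  rcases hva z c hz hzv hza fun h => hab (hT.sameBranch_trans h.symm hzvb) with h | h
  exacts [Or.inr (hT.inBranch_of_sameBranch hz.adj hzvb h), Or.inl h]

lemma SimpleGraph.IsTree.unblocked_of_inBranch (hT : T.IsTree) (hvx : T.Adj v x)
    (hvy : T.Adj v y) (hxy : x ≠ y) (hturn : ∀ c, IsStar T F v c → c = x ∨ c = y)
    (ha : T.InBranch v x a) (hb : T.InBranch v y b) (hva : Unblocked T F v a)
    (hvb : Unblocked T F v b) :
    Unblocked T F a b := by
  intro z c hz hza hzb hab
  obtain rfl | hzv := eq_or_ne z v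
  · rcases hturn c hz with rfl | rfl
    exacts [Or.inl ha, Or.inr hb]
  by_cases hzx : T.InBranch v x z
  · exact hT.centre_toward_of_unblocked hvx hvy hxy hva hb hz hzx hza hab
  by_cases hzy : T.InBranch v y z
  · exact (hT.centre_toward_of_unblocked hvy hvx hxy.symm hvb ha hz hzy hzb
      fun h => hab h.symm).symm
  exact (hab (hT.sameBranch_trans (hT.sameBranch_of_inBranch hvx hzv hzx ha).symm
    (hT.sameBranch_of_inBranch hvy hzv hzy hb))).elim

lemma admissible_cons_cons_iff_s8 {hax : T.Adj a x} {hxy : T.Adj x y} {q : T.Walk y b} :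
    Admissible T F (.cons hax (.cons hxy q)) ↔
      (F x).Adj ⟨a, hax.symm⟩ ⟨y, hxy⟩ ∧ Admissible T F (.cons hxy q) :=
  ⟨fun h => by cases h; exact ⟨‹_›, ‹_›⟩, fun h => .cons _ _ _ h.1 h.2⟩

lemma SimpleGraph.IsTree.admissible_iff_unblocked (hT : T.IsTree)
    (hCS : ∀ w : V, ¬ IsLeaf T w → CompleteLabel (F w) ∨ ∃ c, StarLabel (F w) c)
    {p : T.Walk a b} (hp : p.IsPath) : Admissible T F p ↔ Unblocked T F a b := by
  induction p with
  | nil => exact iff_of_true .nil hT.unblocked_self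
  | @cons a x b hax q ih =>
    cases q with
    | nil => exact iff_of_true (.single hax) (hT.unblocked_of_adj hax)
    | @cons _ y _ hxy q =>
      have ha := ((Walk.cons_isPath_iff _ _).mp hp).2
      have hx := ((Walk.cons_isPath_iff _ _).mp hp.of_cons).2
      have hay : a ≠ y := fun h => ha (by simp [h])
      have hb : T.InBranch x y b := (inBranch_self x y).of_walk q hx
      rw [admissible_cons_cons_iff_s8, label_adj_iff (hCS x) hax.symm hxy hay, ih hp.of_cons]
      constructor
      · rintro ⟨hturn, hxb⟩
        exact hT.unblocked_of_inBranch hax.symm hxy hay hturn (inBranch_self x a) hb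
          (hT.unblocked_of_adj hax.symm) hxb
      · intro hab
        refine ⟨fun c hc => ?_, hT.unblocked_of_unblocked_of_adj hab hax
          (hT.sameBranch_of_not_mem_support _ ha)⟩
        have hxb : x ≠ b := fun h => hx (h ▸ q.end_mem_support)
        rcases hab x c hc hax.ne' hxb (hT.not_sameBranch_of_mem_support hp
          (by simp)) with h | h
        exacts [Or.inl (hT.inBranch_unique hc.adj hax.symm h (inBranch_self x a)),
          Or.inr (hT.inBranch_unique hc.adj hxy h hb)]

lemma SimpleGraph.IsTree.accessible_iff_unblocked (hT : T.IsTree)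
    (hCS : ∀ w : V, ¬ IsLeaf T w → CompleteLabel (F w) ∨ ∃ c, StarLabel (F w) c) :
    Accessible T F a b ↔ Unblocked T F a b := by
  refine ⟨fun ⟨p, hp, h⟩ => (hT.admissible_iff_unblocked hCS hp).mp h, fun h => ?_⟩
  obtain ⟨p, hp, -⟩ := hT.existsUnique_path a b
  exact ⟨p, hp, (hT.admissible_iff_unblocked hCS hp).mpr h⟩

lemma SimpleGraph.IsTree.accGraph_adj_iff (hT : T.IsTree)
    (hCS : ∀ w : V, ¬ IsLeaf T w → CompleteLabel (F w) ∨ ∃ c, StarLabel (F w) c)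
    {a b : {l : V // IsLeaf T l}} : (accGraph T F).Adj a b ↔ a ≠ b ∧ Unblocked T F a b := by
  rw [accGraph, fromRel_adj, hT.accessible_iff_unblocked hCS, hT.accessible_iff_unblocked hCS]
  exact and_congr_right fun _ => or_iff_left_of_imp Unblocked.symm

lemma exists_adj_ne_forall_isStar (hdeg : 3 ≤ (T.neighborSet x).ncard) (w : V) :
    ∃ y, T.Adj x y ∧ y ≠ w ∧ ∀ c, IsStar T F x c → c = w ∨ c = y := by
  by_cases h : ∃ c, IsStar T F x c ∧ c ≠ w
  · obtain ⟨c, hc, hcw⟩ := h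
    exact ⟨c, hc.adj, hcw, fun c' hc' => Or.inr (hc'.centre_unique hdeg hc)⟩
  · obtain ⟨y, hxy, hyw, -⟩ := exists_adj_ne_ne hdeg w w
    exact ⟨y, hxy, hyw, fun c hc => Or.inl (not_not.mp fun hcw => h ⟨c, hc, hcw⟩)⟩

lemma SimpleGraph.IsTree.exists_isLeaf_inBranch_unblocked [Finite V] (hT : T.IsTree)
    (hdeg : ∀ w : V, ¬ IsLeaf T w → 3 ≤ (T.neighborSet w).ncard) (hwx : T.Adj w x) :
    ∃ l, IsLeaf T l ∧ T.InBranch w x l ∧ Unblocked T F w l := by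
  induction hn : {a | T.InBranch w x a}.ncard using Nat.strong_induction_on generalizing w x with
  | _ n ih =>
  by_cases hx : IsLeaf T x
  · exact ⟨x, hx, inBranch_self w x, hT.unblocked_of_adj hwx⟩
  obtain ⟨y, hxy, hyw, hturn⟩ := exists_adj_ne_forall_isStar (F := F) (hdeg x hx) w
  have hsub : ∀ a, T.InBranch x y a → T.InBranch w x a :=
    fun a => hT.inBranch_mono hwx hxy (inBranch_self w x)
      fun h => hyw (hT.inBranch_unique hxy hwx.symm h (inBranch_self x w))
  have hlt : {a | T.InBranch x y a}.ncard < n := hn ▸ Set.ncard_lt_ncard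
    ⟨hsub, fun h => hT.not_inBranch_self hxy (h (inBranch_self w x))⟩
  obtain ⟨l, hl, hyl, hxl⟩ := ih _ hlt hxy rfl
  exact ⟨l, hl, hsub l hyl, hT.unblocked_of_inBranch hwx.symm hxy hyw.symm hturn
    (inBranch_self x w) hyl (hT.unblocked_of_adj hwx.symm) hxl⟩

lemma SimpleGraph.IsTree.not_unblocked_of_isStar (hT : T.IsTree) (hv : IsStar T F v c)
    (hvx : T.Adj v x) (hvy : T.Adj v y) (hxy : x ≠ y) (hxc : x ≠ c) (hyc : y ≠ c)
    (ha : T.InBranch v x a) (hb : T.InBranch v y b) : ¬ Unblocked T F a b := by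
  intro h
  have hva : v ≠ a := fun h => hT.not_inBranch_self hvx (h ▸ ha)
  have hvb : v ≠ b := fun h => hT.not_inBranch_self hvy (h ▸ hb)
  have hab : ¬ T.SameBranch v a b := fun h =>
    hxy (hT.inBranch_unique hvx hvy (hT.inBranch_of_sameBranch hvx h ha) hb)
  rcases h v c hv hva hvb hab with h | h
  exacts [hxc (hT.inBranch_unique hvx hv.adj ha h), hyc (hT.inBranch_unique hvy hv.adj hb h)]

def Blocks (T : SimpleGraph V) (F : ∀ v : V, SimpleGraph (T.neighborSet v)) (v c a b : V) :
    Prop :=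
  IsStar T F v c ∧ v ≠ a ∧ v ≠ b ∧ ¬ T.SameBranch v a b ∧
    ¬ T.InBranch v c a ∧ ¬ T.InBranch v c b

lemma not_unblocked_iff : ¬ Unblocked T F a b ↔ ∃ v c, Blocks T F v c a b := by
  simp only [Unblocked, Blocks, not_forall, not_or, exists_prop]

lemma Blocks.symm (h : Blocks T F v c a b) : Blocks T F v c b a :=
  let ⟨hv, hva, hvb, hab, ha, hb⟩ := h; ⟨hv, hvb, hva, fun h => hab h.symm, hb, ha⟩

lemma SimpleGraph.IsTree.inBranch_of_blocks (hT : T.IsTree) (h : Blocks T F v c a b)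
    (hvm : v ≠ l) (hal : Unblocked T F a l) (hlb : Unblocked T F l b) : T.InBranch v c l := by
  obtain ⟨hv, hva, hvb, hab, ha, hb⟩ := h
  by_cases hsal : T.SameBranch v a l
  · exact (hlb v c hv hvm hvb fun h => hab (hT.sameBranch_trans hsal h)).resolve_right hb
  · exact (hal v c hv hva hvm hsal).resolve_left ha

def Away (T : SimpleGraph V) (F : ∀ v : V, SimpleGraph (T.neighborSet v)) (u cu v cv : V) :
    Prop :=
  IsStar T F u cu ∧ IsStar T F v cv ∧ u ≠ v ∧ ¬ T.InBranch u cu v ∧ ¬ T.InBranch v cv u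

lemma Away.disjoint (h : Away T F u cu v cv) (hu : T.InBranch u cu a) :
    ¬ T.InBranch v cv a := by
  obtain ⟨hcu, hcv, huv, hv, hu'⟩ := h
  refine inBranch_disjoint hcu.adj hcv.adj (fun he => ?_) hv hu' hu
  rcases Sym2.eq_iff.mp he with ⟨he, -⟩ | ⟨-, rfl⟩
  exacts [huv he, hv (inBranch_self _ _)]

lemma SimpleGraph.IsTree.away_not_adj (hT : T.IsTree) (h : Away T F u cu v cv)
    (hu : T.InBranch u cu a ∨ T.InBranch u cu b) (hv : T.InBranch v cv a ∨ T.InBranch v cv b) :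
    ¬ T.Adj a b := by
  intro hab
  have cross : ∀ {x y}, T.Adj x y → T.InBranch u cu x → ¬ T.InBranch v cv y := by
    intro x y hxy hx hy
    by_cases he : s(x, y) = s(u, cu)
    · obtain ⟨hcu, -, -, -, hu⟩ := h
      rcases Sym2.eq_iff.mp he with ⟨rfl, -⟩ | ⟨-, rfl⟩
      exacts [hT.not_inBranch_self hcu.adj hx, hu hy]
    · exact h.disjoint ((inBranch_congr hxy he).mp hx) hy
  rcases hu with hu | hu <;> rcases hv with hv | hv
  exacts [h.disjoint hu hv, cross hab hu hv, cross hab.symm hu hv, h.disjoint hu hv]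

lemma SimpleGraph.IsTree.exists_edge_of_forall_not_away [Finite V] (hT : T.IsTree)
    (hdeg : ∀ w : V, ¬ IsLeaf T w → 3 ≤ (T.neighborSet w).ncard)
    (h : ∀ u cu v cv, ¬ Away T F u cu v cv) :
    ∃ a b, T.Adj a b ∧ ∀ w c, IsStar T F w c → T.InBranch w c a ∨ T.InBranch w c b := by
  by_cases hs : ∃ w c, IsStar T F w c
  · obtain ⟨w, c, hwc⟩ := hs
    obtain ⟨⟨u, cu⟩, hu, hmin⟩ := Set.exists_min_image {e : V × V | IsStar T F e.1 e.2}
      (fun e => {a | T.InBranch e.1 e.2 a}.ncard) (Set.toFinite _) ⟨(w, c), hwc⟩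
    refine ⟨u, cu, hu.adj, fun w c hwc => ?_⟩
    obtain rfl | hwu := eq_or_ne w u
    · obtain rfl := hwc.centre_unique (hdeg w hwc.1) hu
      exact Or.inr (inBranch_self w c)
    by_cases hwcu : T.InBranch w c u
    · exact Or.inl hwcu
    by_cases hucw : T.InBranch u cu w
    · have hsub : {a | T.InBranch w c a} ⊂ {a | T.InBranch u cu a} :=
        ⟨fun a => hT.inBranch_mono hu.adj hwc.adj hucw hwcu,
          fun hsub => hT.not_inBranch_self hwc.adj (hsub hucw)⟩
      exact ((Set.ncard_lt_ncard hsub).not_ge (hmin (w, c) hwc)).elim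
    · exact (h u cu w c ⟨hu, hwc, hwu.symm, hucw, hwcu⟩).elim
  · obtain ⟨v⟩ := hT.connected.nonempty
    by_cases hv : IsLeaf T v
    · obtain ⟨w, hvw, -⟩ := hv
      exact ⟨v, w, hvw, fun w c hwc => (hs ⟨w, c, hwc⟩).elim⟩
    · obtain ⟨w, hvw, -⟩ := exists_adj_ne_ne (hdeg v hv) v v
      exact ⟨v, w, hvw, fun w c hwc => (hs ⟨w, c, hwc⟩).elim⟩

lemma SimpleGraph.IsTree.not_blocks_of_separates (hT : T.IsTree) (hvc : T.Adj v cv)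
    (ha : ¬ T.InBranch v cv a) (hb : T.InBranch v cv b) (hc : ¬ T.InBranch v cv c)
    (hd : T.InBranch v cv d) (hzv : z ≠ v) (hzc : z ≠ c) (hzb : T.InBranch z cz b)
    (hcd : Unblocked T F c d) : ¬ Blocks T F z cz a d := by
  rintro ⟨hz, -, hzd, had, hza, hzd'⟩
  by_cases hvz : T.InBranch v cv z
  · have hzva := hT.sameBranch_of_not_inBranch hvc hvz ha
    have hzvc := hT.sameBranch_of_not_inBranch hvc hvz hc
    have hca := hT.sameBranch_trans hzvc.symm hzva
    rcases hcd z cz hz hzc hzd fun h => had (hT.sameBranch_trans hca.symm h) with h | h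
    exacts [hza (hT.inBranch_of_sameBranch hz.adj hca h), hzd' h]
  · have hbd := hT.sameBranch_trans (hT.sameBranch_of_inBranch hvc hzv hvz hb).symm
      (hT.sameBranch_of_inBranch hvc hzv hvz hd)
    exact hzd' (hT.inBranch_of_sameBranch hz.adj hbd hzb)

lemma SimpleGraph.IsTree.exists_away_of_unblocked_p4 (hT : T.IsTree)
    (hdeg : ∀ w : V, ¬ IsLeaf T w → 3 ≤ (T.neighborSet w).ncard)
    (hb : IsLeaf T b) (hc : IsLeaf T c)
    (hab : Unblocked T F a b) (hbc : Unblocked T F b c) (hcd : Unblocked T F c d)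
    (hac : ¬ Unblocked T F a c) (had : ¬ Unblocked T F a d) (hbd : ¬ Unblocked T F b d) :
    ∃ u cu v cv, Away T F u cu v cv := by
  obtain ⟨v, cv, hv⟩ := not_unblocked_iff.mp hac
  obtain ⟨w, cw, hw⟩ := not_unblocked_iff.mp hbd
  obtain ⟨z, cz, hz⟩ := not_unblocked_iff.mp had
  obtain ⟨hvS, -, -, -, hva, hvc⟩ := id hv
  obtain ⟨hwS, -, -, -, hwb, hwd⟩ := id hw
  obtain ⟨hzS, hza, hzd, hzad, hza', hzd'⟩ := id hz
  have hvb := hT.inBranch_of_blocks hv (hvS.ne_of_isLeaf hb) hab hbc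
  have hwc := hT.inBranch_of_blocks hw (hwS.ne_of_isLeaf hc) hbc hcd
  have hzbc : T.InBranch z cz b ∨ T.InBranch z cz c := by
    refine or_iff_not_imp_left.mpr fun hzb =>
      hT.inBranch_of_blocks ?_ (hzS.ne_of_isLeaf hc) hbc hcd
    refine ⟨hzS, hzS.ne_of_isLeaf hb, hzd, fun hbd => hzad (hT.sameBranch_trans ?_ hbd), hzb,
      hzd'⟩
    by_contra hzab
    exact (hab z cz hzS hza (hzS.ne_of_isLeaf hb) hzab).elim hza' hzb
  have hvw : v ≠ w := by
    rintro rfl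
    exact hwb (hvS.centre_unique (hdeg v hvS.1) hwS ▸ hvb)
  have not_facing : ¬ (T.InBranch v cv w ∧ T.InBranch w cw v) := by
    rintro ⟨hvw', hwv'⟩
    have hvd := hT.inBranch_of_sameBranch hvS.adj
      (hT.sameBranch_of_not_inBranch hwS.adj hwv' hwd) hvw'
    have hwa := hT.inBranch_of_sameBranch hwS.adj
      (hT.sameBranch_of_not_inBranch hvS.adj hvw' hva) hwv'
    have hzv : z ≠ v := by
      rintro rfl
      exact hzd' (hvS.centre_unique (hdeg z hzS.1) hzS ▸ hvd)
    have hzw : z ≠ w := by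
      rintro rfl
      exact hza' (hwS.centre_unique (hdeg z hzS.1) hzS ▸ hwa)
    rcases hzbc with hzb | hzc
    · exact hT.not_blocks_of_separates hvS.adj hva hvb hvc hvd hzv (hzS.ne_of_isLeaf hc) hzb
        hcd hz
    · exact hT.not_blocks_of_separates hwS.adj hwd hwc hwb hwa hzw (hzS.ne_of_isLeaf hb) hzc
        hab.symm hz.symm
  have hnvw : ¬ T.InBranch v cv w := fun hvw' => by
    by_cases hwv' : T.InBranch w cw v
    · exact not_facing ⟨hvw', hwv'⟩
    · exact hvc (hT.inBranch_mono hvS.adj hwS.adj hvw' hwv' hwc)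
  exact ⟨v, cv, w, cw, hvS, hwS, hvw, hnvw,
    fun hwv' => hwb (hT.inBranch_mono hwS.adj hvS.adj hwv' hnvw hvb)⟩

lemma SimpleGraph.IsTree.unblocked_of_away_of_minimal (hT : T.IsTree)
    (h : Away T F u cu v cv) (hmin : ∀ z cz, Away T F u cu z cz → T.dist u v ≤ T.dist u z) :
    Unblocked T F u v := by
  intro z cz hz hzu hzv huv
  by_contra hn
  rw [not_or] at hn
  obtain ⟨hcu, -, -, hv, -⟩ := h
  have hz' : ¬ T.InBranch u cu z := fun h => huv (hT.sameBranch_of_not_inBranch hcu.adj h hv)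
  exact (hmin z cz ⟨hcu, hz, hzu.symm, hz', hn.1⟩).not_gt (hT.dist_lt_of_not_sameBranch hzv huv)

lemma SimpleGraph.IsTree.exists_away_unblocked (hT : T.IsTree)
    (h : ∃ u cu v cv, Away T F u cu v cv) :
    ∃ u cu v cv, Away T F u cu v cv ∧ Unblocked T F u v := by
  obtain ⟨u, cu, v, cv, h⟩ := h
  obtain ⟨⟨u, cu, v, cv⟩, h, hmin⟩ :=
    (measure fun e : V × V × V × V => T.dist e.1 e.2.2.1).wf.has_min
      {e | Away T F e.1 e.2.1 e.2.2.1 e.2.2.2} ⟨(u, cu, v, cv), h⟩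
  exact ⟨u, cu, v, cv, h, hT.unblocked_of_away_of_minimal h fun z cz hz =>
    not_lt.mp (hmin (u, cu, z, cz) hz)⟩

lemma SimpleGraph.IsTree.exists_unblocked_p4_of_away [Finite V] (hT : T.IsTree)
    (hdeg : ∀ w : V, ¬ IsLeaf T w → 3 ≤ (T.neighborSet w).ncard) (h : Away T F u cu v cv)
    (huv : Unblocked T F u v) :
    ∃ a b c d, IsLeaf T a ∧ IsLeaf T b ∧ IsLeaf T c ∧ IsLeaf T d ∧
      Unblocked T F a b ∧ Unblocked T F b c ∧ Unblocked T F c d ∧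
      ¬ Unblocked T F a c ∧ ¬ Unblocked T F a d ∧ ¬ Unblocked T F b d := by
  obtain ⟨hu, hv, hne, hcuv, hcvu⟩ := h
  obtain ⟨p, hup, hpv⟩ := hT.exists_inBranch hne
  obtain ⟨q, hvq, hqu⟩ := hT.exists_inBranch hne.symm
  have hpc : p ≠ cu := fun he => hcuv (he ▸ hpv)
  have hqc : q ≠ cv := fun he => hcvu (he ▸ hqu)
  obtain ⟨t, hut, htc, htp⟩ := exists_adj_ne_ne (hdeg u hu.1) cu p
  obtain ⟨s, hvs, hsc, hsq⟩ := exists_adj_ne_ne (hdeg v hv.1) cv q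
  obtain ⟨a, ha, hta, hua⟩ := hT.exists_isLeaf_inBranch_unblocked (F := F) hdeg hut
  obtain ⟨b, hb, hcb, hub⟩ := hT.exists_isLeaf_inBranch_unblocked (F := F) hdeg hu.adj
  obtain ⟨c, hc, hcc, hvc⟩ := hT.exists_isLeaf_inBranch_unblocked (F := F) hdeg hv.adj
  obtain ⟨d, hd, hsd, hvd⟩ := hT.exists_isLeaf_inBranch_unblocked (F := F) hdeg hvs
  have hpc' : T.InBranch u p c := hT.inBranch_mono hup hv.adj hpv hcvu hcc
  have hpd : T.InBranch u p d :=
    hT.inBranch_mono hup hvs hpv (fun h => hsq (hT.inBranch_unique hvs hvq h hqu)) hsd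
  have hqb : T.InBranch v q b := hT.inBranch_mono hvq hu.adj hqu hcuv hcb
  have hturn_u : ∀ x c', IsStar T F u c' → c' = x ∨ c' = cu :=
    fun _ c' hc' => Or.inr (hc'.centre_unique (hdeg u hu.1) hu)
  have hturn_v : ∀ x c', IsStar T F v c' → c' = x ∨ c' = cv :=
    fun _ c' hc' => Or.inr (hc'.centre_unique (hdeg v hv.1) hv)
  have hbv := hT.unblocked_of_inBranch hu.adj hup hpc.symm
    (fun c' hc' => (hturn_u p c' hc').symm) hcb hpv hub huv
  refine ⟨a, b, c, d, ha, hb, hc, hd,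
    hT.unblocked_of_inBranch hut hu.adj htc (hturn_u t) hta hcb hua hub,
    hT.unblocked_of_inBranch hvq hv.adj hqc (hturn_v q) hqb hcc hbv.symm hvc,
    hT.unblocked_of_inBranch hv.adj hvs hsc.symm (fun c' hc' => (hturn_v s c' hc').symm)
      hcc hsd hvc hvd,
    hT.not_unblocked_of_isStar hu hut hup htp htc hpc hta hpc',
    hT.not_unblocked_of_isStar hu hut hup htp htc hpc hta hpd,
    hT.not_unblocked_of_isStar hv hvq hvs hsq.symm hqc hsc hqb hsd⟩

lemma SimpleGraph.IsTree.isInducedP4_accGraph_iff (hT : T.IsTree)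
    (hCS : ∀ w : V, ¬ IsLeaf T w → CompleteLabel (F w) ∨ ∃ c, StarLabel (F w) c)
    {a b c d : {l : V // IsLeaf T l}} :
    (accGraph T F).IsInducedP4 a b c d ↔
      Unblocked T F a b ∧ Unblocked T F b c ∧ Unblocked T F c d ∧
      ¬ Unblocked T F a c ∧ ¬ Unblocked T F a d ∧ ¬ Unblocked T F b d := by
  simp only [IsInducedP4, hT.accGraph_adj_iff hCS, not_and]
  constructor
  · rintro ⟨-, hac, had, -, hbd, -, ⟨-, hab⟩, ⟨-, hbc⟩, ⟨-, hcd⟩, hnac, hnad, hnbd⟩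
    exact ⟨hab, hbc, hcd, hnac hac, hnad had, hnbd hbd⟩
  · rintro ⟨hab, hbc, hcd, hac, had, hbd⟩
    have ne : ∀ {x y : {l : V // IsLeaf T l}}, ¬ Unblocked T F x y → x ≠ y := by
      rintro x _ h rfl
      exact h hT.unblocked_self
    have hab' : a ≠ b := by rintro rfl; exact hac hbc
    have hbc' : b ≠ c := by rintro rfl; exact hac hab
    have hcd' : c ≠ d := by rintro rfl; exact hbd hbc
    exact ⟨hab', ne hac, ne had, hbc', ne hbd, hcd', ⟨hab', hab⟩, ⟨hbc', hbc⟩,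
      ⟨hcd', hcd⟩, fun _ => hac, fun _ => had, fun _ => hbd⟩

lemma SimpleGraph.IsTree.exists_isInducedP4_iff_exists_away [Finite V] (hT : T.IsTree)
    (hCS : ∀ w : V, ¬ IsLeaf T w → CompleteLabel (F w) ∨ ∃ c, StarLabel (F w) c)
    (hdeg : ∀ w : V, ¬ IsLeaf T w → 3 ≤ (T.neighborSet w).ncard) :
    (∃ a b c d, (accGraph T F).IsInducedP4 a b c d) ↔ ∃ u cu v cv, Away T F u cu v cv := by
  constructor
  · rintro ⟨a, b, c, d, h⟩
    obtain ⟨hab, hbc, hcd, hac, had, hbd⟩ := (hT.isInducedP4_accGraph_iff hCS).mp h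
    exact hT.exists_away_of_unblocked_p4 hdeg b.2 c.2 hab hbc hcd hac had hbd
  · intro h
    obtain ⟨u, cu, v, cv, h, huv⟩ := hT.exists_away_unblocked h
    obtain ⟨a, b, c, d, ha, hb, hc, hd, h⟩ := hT.exists_unblocked_p4_of_away hdeg h huv
    exact ⟨⟨a, ha⟩, ⟨b, hb⟩, ⟨c, hc⟩, ⟨d, hd⟩,
      (hT.isInducedP4_accGraph_iff hCS).mpr h⟩

end CliqueStarTree

theorem stmt8_general [Fintype V] (T : SimpleGraph V) (hT : T.IsTree)
    (F : ∀ w : V, SimpleGraph (T.neighborSet w))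
    -- every label is a clique or a star:
    (hCS : ∀ w : V, ¬ IsLeaf T w → CompleteLabel (F w) ∨ ∃ c, StarLabel (F w) c)
    -- (T,F) is reduced:
    (hdeg : ∀ w : V, ¬ IsLeaf T w → 3 ≤ (T.neighborSet w).ncard) :
    (¬ ∃ a b c d : {l : V // IsLeaf T l},
        a ≠ b ∧ a ≠ c ∧ a ≠ d ∧ b ≠ c ∧ b ≠ d ∧ c ≠ d ∧
        (accGraph T F).Adj a b ∧ (accGraph T F).Adj b c ∧ (accGraph T F).Adj c d ∧
        ¬ (accGraph T F).Adj a c ∧ ¬ (accGraph T F).Adj a d ∧ ¬ (accGraph T F).Adj b d) ↔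
    ((∃ r : V, ¬ IsLeaf T r ∧ CompleteLabel (F r) ∧
        ∀ w : V, ¬ IsLeaf T w → ∀ c : T.neighborSet w, StarLabel (F w) c →
          ¬ (T.deleteEdges {s(w, (c : V))}).Reachable w r) ∨
      (∃ a b : V, T.Adj a b ∧
        ∀ w : V, ¬ IsLeaf T w → ∀ c : T.neighborSet w, StarLabel (F w) c →
          (¬ (T.deleteEdges {s(w, (c : V))}).Reachable w a ∨
            ¬ (T.deleteEdges {s(w, (c : V))}).Reachable w b))) := by
  have hP4 := hT.exists_isInducedP4_iff_exists_away hCS hdeg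
  have towards {w c : V} (hwc : IsStar T F w c) (r : V) :=
    hT.not_reachable_deleteEdges_iff (a := r) hwc.adj
  refine ⟨fun h => Or.inr ?_, fun h hp => ?_⟩
  · obtain ⟨a, b, hab, hs⟩ := hT.exists_edge_of_forall_not_away hdeg
      fun u cu v cv huv => h (hP4.mpr ⟨u, cu, v, cv, huv⟩)
    refine ⟨a, b, hab, fun w hw c hc => ?_⟩
    have hwc : IsStar T F w c := ⟨hw, c.2, hc⟩
    exact (hs w c hwc).imp (towards hwc a).mpr (towards hwc b).mpr
  · obtain ⟨u, cu, v, cv, huv⟩ := hP4.mp hp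
    obtain ⟨⟨hu, hucu, hu'⟩, ⟨hv, hvcv, hv'⟩, -⟩ := id huv
    rcases h with ⟨r, -, -, hr⟩ | ⟨a, b, hab, hs⟩
    · exact huv.disjoint ((towards huv.1 r).mp (hr u hu ⟨cu, hucu⟩ hu'))
        ((towards huv.2.1 r).mp (hr v hv ⟨cv, hvcv⟩ hv'))
    · exact hT.away_not_adj huv
        ((hs u hu ⟨cu, hucu⟩ hu').imp (towards huv.1 a).mp (towards huv.1 b).mp)
        ((hs v hv ⟨cv, hvcv⟩ hv').imp (towards huv.2.1 a).mp (towards huv.2.1 b).mp) hab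

/-- the accessibility graph of a reduced clique-star labelled tree has no
induced `P₄` iff there is a clique node, or a tree-edge, of `T` towards which every
star node is oriented (i.e. removing the tree-edge carrying the centre of the star
disconnects the star node from that clique node, resp. from an endpoint of that edge). -/
theorem stmt8 [Fintype V] (T : SimpleGraph V) (hT : T.IsTree)
    (F : ∀ w : V, SimpleGraph (T.neighborSet w))
    -- every label is a clique or a star:
    (hCS : ∀ w : V, ¬ IsLeaf T w → CompleteLabel (F w) ∨ ∃ c, StarLabel (F w) c)
    -- (T,F) is reduced:
    (hdeg : ∀ w : V, ¬ IsLeaf T w → 3 ≤ (T.neighborSet w).ncard)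
    (hredK : ∀ a b : V, T.Adj a b → ¬ IsLeaf T a → ¬ IsLeaf T b →
      ¬ (CompleteLabel (F a) ∧ CompleteLabel (F b)))
    (hredS : ∀ a b : V, T.Adj a b →
      ∀ (ca : T.neighborSet a) (cb : T.neighborSet b),
        StarLabel (F a) ca → StarLabel (F b) cb → (ca : V) = b → (cb : V) = a) :
    (¬ ∃ a b c d : {l : V // IsLeaf T l},
        a ≠ b ∧ a ≠ c ∧ a ≠ d ∧ b ≠ c ∧ b ≠ d ∧ c ≠ d ∧
        (accGraph T F).Adj a b ∧ (accGraph T F).Adj b c ∧ (accGraph T F).Adj c d ∧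
        ¬ (accGraph T F).Adj a c ∧ ¬ (accGraph T F).Adj a d ∧ ¬ (accGraph T F).Adj b d) ↔
    ((∃ r : V, ¬ IsLeaf T r ∧ CompleteLabel (F r) ∧
        ∀ w : V, ¬ IsLeaf T w → ∀ c : T.neighborSet w, StarLabel (F w) c →
          ¬ (T.deleteEdges {s(w, (c : V))}).Reachable w r) ∨
      (∃ a b : V, T.Adj a b ∧
        ∀ w : V, ¬ IsLeaf T w → ∀ c : T.neighborSet w, StarLabel (F w) c →
          (¬ (T.deleteEdges {s(w, (c : V))}).Reachable w a ∨
            ¬ (T.deleteEdges {s(w, (c : V))}).Reachable w b))) :=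
  stmt8_general T hT F hCS hdeg
end

section
/- A connected graph G on at least 2 vertices is a cograph (P_4-free) if and only if either G is a single edge, or the complement of G is disconnected and every connected component of the complement induces a cograph in G, i.e. G is the join of at least two smaller cographs. -/
/-! A `P₄` is self-complementary, so its complement is connected and it lies inside one component
of `Gᶜ`; this gives the join direction. Conversely, a graph on at least two vertices that is
connected with connected complement contains a `P₄` (Seinsche): delete a vertex `v` and induct.
Either `G - v` and its complement are still connected, or `v` disconnects `G` or `Gᶜ`; in the
latter case an edge `x - y` of `G - v` from a non-neighbour to a neighbour of `v` and a neighbour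
`z` of `v` in another component of `G - v` give the induced path `x - y - v - z`. -/

open SimpleGraph

/-- `G` has an induced path on four vertices. -/
def HasInducedP4 {V : Type} (G : SimpleGraph V) : Prop :=
  ∃ a b c d : V, a ≠ b ∧ a ≠ c ∧ a ≠ d ∧ b ≠ c ∧ b ≠ d ∧ c ≠ d ∧
    G.Adj a b ∧ G.Adj b c ∧ G.Adj c d ∧ ¬ G.Adj a c ∧ ¬ G.Adj a d ∧ ¬ G.Adj b d

/-- A cograph is a `P₄`-free graph. -/
def IsCograph {V : Type} (G : SimpleGraph V) : Prop := ¬ HasInducedP4 G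

namespace HasInducedP4

variable {V W : Type} {G : SimpleGraph V}

theorem map {H : SimpleGraph W} (f : G ↪g H) (h : HasInducedP4 G) : HasInducedP4 H := by
  obtain ⟨a, b, c, d, hab, hac, had, hbc, hbd, hcd, eab, ebc, ecd, nac, nad, nbd⟩ := h
  exact ⟨f a, f b, f c, f d, f.injective.ne hab, f.injective.ne hac, f.injective.ne had,
    f.injective.ne hbc, f.injective.ne hbd, f.injective.ne hcd, f.map_adj_iff.2 eab,
    f.map_adj_iff.2 ebc, f.map_adj_iff.2 ecd, f.map_adj_iff.not.2 nac, f.map_adj_iff.not.2 nad,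
    f.map_adj_iff.not.2 nbd⟩

/-- `P₄` is self-complementary: the path `a - b - c - d` has complement `c - a - d - b`. -/
theorem compl (h : HasInducedP4 G) : HasInducedP4 Gᶜ := by
  obtain ⟨a, b, c, d, hab, hac, had, hbc, hbd, hcd, eab, ebc, ecd, nac, nad, nbd⟩ := h
  refine ⟨c, a, d, b, hac.symm, hcd, hbc.symm, had, hab, hbd.symm, ?_, ?_, ?_, ?_, ?_, ?_⟩ <;>
    simp_all [compl_adj, adj_comm]

theorem four_le_card [Fintype V] (h : HasInducedP4 G) : 4 ≤ Fintype.card V := by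
  classical
  obtain ⟨a, b, c, d, hab, hac, had, hbc, hbd, hcd, -⟩ := h
  calc 4 = ({a, b, c, d} : Finset V).card := by simp [*]
    _ ≤ Fintype.card V := Finset.card_le_univ _

theorem exists_connectedComponent_compl (h : HasInducedP4 G) :
    ∃ C : Gᶜ.ConnectedComponent, HasInducedP4 (G.induce C.supp) := by
  obtain ⟨a, b, c, d, hab, hac, had, hbc, hbd, hcd, eab, ebc, ecd, nac, nad, nbd⟩ := h
  have cac : Gᶜ.Adj a c := (compl_adj G a c).2 ⟨hac, nac⟩
  have cad : Gᶜ.Adj a d := (compl_adj G a d).2 ⟨had, nad⟩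
  have cbd : Gᶜ.Adj b d := (compl_adj G b d).2 ⟨hbd, nbd⟩
  refine ⟨Gᶜ.connectedComponentMk a, ⟨a, rfl⟩,
    ⟨b, ConnectedComponent.sound (cbd.reachable.trans cad.reachable.symm)⟩,
    ⟨c, ConnectedComponent.sound cac.reachable.symm⟩,
    ⟨d, ConnectedComponent.sound cad.reachable.symm⟩, ?_⟩
  simp_all [Subtype.ext_iff]

end HasInducedP4

theorem hasInducedP4_compl_iff {V : Type} {G : SimpleGraph V} :
    HasInducedP4 Gᶜ ↔ HasInducedP4 G :=
  ⟨fun h => compl_compl G ▸ h.compl, HasInducedP4.compl⟩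

theorem SimpleGraph.induce_compl {V : Type} (G : SimpleGraph V) (s : Set V) :
    Gᶜ.induce s = (G.induce s)ᶜ := by
  ext a b
  simp [Subtype.ext_iff]

section DeleteVertex

variable {V : Type} {G : SimpleGraph V} {v : V}

theorem exists_adj_reachable_induce_compl_singleton {x : V} (p : G.Walk x v)
    (hx : x ∈ ({v}ᶜ : Set V)) :
    ∃ w : ({v}ᶜ : Set V), G.Adj v w ∧ (G.induce {v}ᶜ).Reachable ⟨x, hx⟩ w := by
  induction p with
  | nil => exact absurd rfl hx
  | @cons x y v hxy p ih =>
    by_cases hyv : y = v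
    · subst hyv
      exact ⟨⟨x, hx⟩, hxy.symm, .refl _⟩
    · obtain ⟨w, hvw, hyw⟩ := ih hyv
      exact ⟨w, hvw, (show (G.induce {v}ᶜ).Adj ⟨x, hx⟩ ⟨y, hyv⟩ from hxy).reachable.trans hyw⟩

theorem hasInducedP4_of_not_connected_induce_compl_singleton (hG : G.Connected) {u : V}
    (huv : u ≠ v) (hvu : ¬ G.Adj v u) (hH : ¬ (G.induce {v}ᶜ).Connected) : HasInducedP4 G := by
  classical
  set H := G.induce ({v}ᶜ : Set V)
  have nbr (x : ({v}ᶜ : Set V)) : ∃ w : ({v}ᶜ : Set V), G.Adj v w ∧ H.Reachable x w :=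
    exists_adj_reachable_induce_compl_singleton (hG.preconnected x v).some x.2
  let u' : ({v}ᶜ : Set V) := ⟨u, huv⟩
  obtain ⟨z, hvz, huz⟩ : ∃ z : ({v}ᶜ : Set V), G.Adj v z ∧ ¬ H.Reachable u' z := by
    have : Nonempty ({v}ᶜ : Set V) := ⟨u'⟩
    obtain ⟨a, b, hab⟩ : ∃ a b, ¬ H.Reachable a b := by
      by_contra! h
      exact hH ⟨h⟩
    obtain ⟨a', hva', haa'⟩ := nbr a
    obtain ⟨b', hvb', hbb'⟩ := nbr b
    by_contra! h
    exact hab (haa'.trans ((h a' hva').symm.trans ((h b' hvb').trans hbb'.symm)))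
  obtain ⟨w, hvw, ⟨p⟩⟩ := nbr u'
  obtain ⟨d, hd, hx, hy⟩ := p.exists_boundary_dart {x | ¬ G.Adj v x} hvu (by simpa using hvw)
  have hxz : ¬ H.Reachable d.fst z := fun h =>
    huz (Reachable.trans ⟨p.takeUntil _ (p.dart_fst_mem_support_of_mem_darts hd)⟩ h)
  have hyz : ¬ H.Reachable d.snd z := fun h => hxz (d.adj.reachable.trans h)
  refine ⟨d.fst, d.snd, v, z, Subtype.coe_ne_coe.2 d.adj.ne, d.fst.2,
    fun h => hxz (Subtype.ext h ▸ .refl _), d.snd.2, fun h => hyz (Subtype.ext h ▸ .refl _),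
    Ne.symm z.2, d.adj, (not_not.1 hy).symm, hvz, fun h => hx h.symm,
    fun h => hxz (show H.Adj d.fst z from h).reachable,
    fun h => hyz (show H.Adj d.snd z from h).reachable⟩

end DeleteVertex

theorem hasInducedP4_of_connected_of_connected_compl {V : Type} [Finite V] [Nontrivial V]
    {G : SimpleGraph V} (hG : G.Connected) (hGc : Gᶜ.Connected) : HasInducedP4 G := by
  induction hn : Nat.card V using Nat.strong_induction_on generalizing V with
  | _ n ih =>
    obtain ⟨v, -⟩ := exists_pair_ne V
    obtain ⟨w, hvw⟩ := hG.preconnected.exists_adj_of_nontrivial v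
    obtain ⟨u, hvu⟩ := hGc.preconnected.exists_adj_of_nontrivial v
    by_cases hH : (G.induce {v}ᶜ).Connected
    swap
    · exact hasInducedP4_of_not_connected_induce_compl_singleton hG hvu.ne' hvu.2 hH
    by_cases hHc : (Gᶜ.induce {v}ᶜ).Connected
    swap
    · exact hasInducedP4_compl_iff.1 <| hasInducedP4_of_not_connected_induce_compl_singleton hGc
        hvw.ne' (by simp [hvw]) hHc
    have : Nontrivial ({v}ᶜ : Set V) :=
      ⟨⟨u, hvu.ne'⟩, ⟨w, hvw.ne'⟩, fun h => hvu.2 (Subtype.mk.inj h ▸ hvw)⟩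
    have hcard : Nat.card ({v}ᶜ : Set V) < n := hn ▸ Finite.card_subtype_lt (x := v) (by simp)
    rw [induce_compl] at hHc
    exact (ih _ hcard hH hHc rfl).map (Embedding.induce _)

/-- a connected graph on at least two vertices is a cograph iff it is a
single edge, or its complement is disconnected and every connected component of the
complement induces a cograph in `G` (i.e. `G` is a join of smaller cographs). -/
theorem stmt12 (V : Type) [Fintype V] (G : SimpleGraph V) (hG : G.Connected)
    (hcard : 2 ≤ Fintype.card V) :
    IsCograph G ↔
      (Fintype.card V = 2 ∨
        (¬ Gᶜ.Connected ∧ ∀ C : Gᶜ.ConnectedComponent,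
          IsCograph (SimpleGraph.induce C.supp G))) := by
  constructor
  · intro hcog
    have : Nontrivial V := Fintype.one_lt_card_iff_nontrivial.1 hcard
    exact .inr ⟨fun hGc => hcog (hasInducedP4_of_connected_of_connected_compl hG hGc),
      fun C hC => hcog (hC.map (Embedding.induce _))⟩
  · rintro (h2 | ⟨-, hcomp⟩) hP4
    · have := hP4.four_le_card
      omega
    · obtain ⟨C, hC⟩ := hP4.exists_connectedComponent_compl
      exact hcomp C hC
end

section
/- Let G be a distance-hereditary graph and let x, y be adjacent true twins (N(x) ∪ {x} = N(y) ∪ {y}). Then G − xy is distance hereditary. -/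
/-!
If `x` and `y` are twins, a walk through the edge `xy` between two other endpoints can be
rerouted around it: a neighbour of `x` on the walk is also a neighbour of `y`. Hence deleting
`xy` changes no distance except `d(x, y)`, which becomes `2` as soon as `x` and `y` stay
connected. In a connected induced subgraph of `G - xy` the same holds, so its distances are
those of the corresponding induced subgraph of `G`, which are those of `G` and hence of `G - xy`.
-/

open SimpleGraph

/-- A graph is distance hereditary if every connected induced subgraph preserves the
distances of the original graph. -/
def IsDistHereditary {V : Type} (G : SimpleGraph V) : Prop :=
  ∀ s : Set V, (SimpleGraph.induce s G).Connected →
    ∀ x y : s, (SimpleGraph.induce s G).dist x y = G.dist ↑x ↑y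

namespace SimpleGraph

variable {V W : Type*} {G : SimpleGraph V} {x y : V}

/-- Twins in the broad sense: `x` and `y` may or may not be adjacent. -/
def AreTwins (G : SimpleGraph V) (x y : V) : Prop :=
  ∀ ⦃a⦄, a ≠ x → a ≠ y → (G.Adj a x ↔ G.Adj a y)

lemma areTwins_of_neighborSet_union_eq
    (h : G.neighborSet x ∪ {x} = G.neighborSet y ∪ {y}) : G.AreTwins x y := by
  intro a hax hay
  have := congrArg (a ∈ ·) h
  simp only [Set.mem_union, mem_neighborSet, Set.mem_singleton_iff, eq_iff_iff] at this
  simpa [hax, hay, adj_comm] using this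

namespace AreTwins

lemma comap {f : W ↪ V} {x y : W} (h : G.AreTwins (f x) (f y)) : (G.comap f).AreTwins x y :=
  fun _ hax hay ↦ h (f.injective.ne hax) (f.injective.ne hay)

lemma deleteEdges_pair (h : G.AreTwins x y) : (G.deleteEdges {s(x, y)}).AreTwins x y := by
  intro a hax hay
  simp [h hax hay, hax, hay]

lemma adj_of_sym2_eq (h : G.AreTwins x y) {a b c : V} (hab : s(a, b) = s(x, y))
    (hca : c ≠ a) (hcb : c ≠ b) (hc : G.Adj c a) : G.Adj c b := by
  rcases Sym2.eq_iff.mp hab with ⟨rfl, rfl⟩ | ⟨rfl, rfl⟩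
  exacts [(h hca hcb).mp hc, (h hcb hca).mpr hc]

lemma exists_walk_deleteEdges_length_le (h : G.AreTwins x y) {u v : V} (p : G.Walk u v)
    (huv : s(u, v) ≠ s(x, y)) :
    ∃ q : (G.deleteEdges {s(x, y)}).Walk u v, q.length ≤ p.length := by
  induction p with
  | nil => exact ⟨.nil, le_rfl⟩
  | @cons u w v huw p ih =>
    by_cases hu : u = v
    · subst hu
      exact ⟨.nil, Nat.zero_le _⟩
    by_cases hwv : s(w, v) = s(x, y)
    · -- `u` sees one end of the deleted edge, hence the other end `v` as well
      have huv' : G.Adj u v := h.adj_of_sym2_eq hwv huw.ne hu huw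
      exact ⟨(deleteEdges_adj.mpr ⟨huv', huv⟩).toWalk, by simp⟩
    obtain ⟨q, hq⟩ := ih hwv
    by_cases huw' : s(u, w) = s(x, y)
    · -- skip the deleted edge `uw` by joining `u` to the successor `b` of `w` on `q`
      cases q with
      | nil => exact absurd huw' huv
      | @cons _ b _ hwb q =>
        obtain ⟨hwb, -⟩ := deleteEdges_adj.mp hwb
        by_cases hbu : b = u
        · subst hbu
          exact ⟨q, by simp at hq ⊢; omega⟩
        have hub : G.Adj u b :=
          (h.adj_of_sym2_eq (Sym2.eq_swap.trans huw') hwb.ne' hbu hwb.symm).symm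
        have hub' : s(u, b) ≠ s(x, y) := by
          rw [← huw']
          simp [hwb.ne', hbu]
        exact ⟨.cons (deleteEdges_adj.mpr ⟨hub, hub'⟩) q, by simp at hq ⊢; omega⟩
    · exact ⟨.cons (deleteEdges_adj.mpr ⟨huw, huw'⟩) q, by simpa using hq⟩

lemma edist_deleteEdges (h : G.AreTwins x y) {u v : V} (huv : s(u, v) ≠ s(x, y)) :
    (G.deleteEdges {s(x, y)}).edist u v = G.edist u v := by
  refine le_antisymm ?_ (edist_anti (deleteEdges_le _))
  by_cases hr : G.Reachable u v
  · obtain ⟨p, hp⟩ := hr.exists_walk_length_eq_edist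
    obtain ⟨q, hq⟩ := h.exists_walk_deleteEdges_length_le p huv
    calc _ ≤ (q.length : ℕ∞) := edist_le q
      _ ≤ _ := by rw [← hp]; exact_mod_cast hq
  · simp [edist_eq_top_of_not_reachable hr]

lemma dist_deleteEdges (h : G.AreTwins x y) {u v : V} (huv : s(u, v) ≠ s(x, y)) :
    (G.deleteEdges {s(x, y)}).dist u v = G.dist u v := by
  rw [dist, dist, h.edist_deleteEdges huv]

lemma dist_deleteEdges_self (h : G.AreTwins x y) (hne : x ≠ y)
    (hr : (G.deleteEdges {s(x, y)}).Reachable x y) :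
    (G.deleteEdges {s(x, y)}).dist x y = 2 := by
  obtain ⟨p⟩ := hr
  have hxy : ¬(G.deleteEdges {s(x, y)}).Adj x y := by simp
  have hxb := p.adj_snd (p.not_nil_of_ne hne)
  have hby : p.snd ≠ y := by rintro h; rw [h] at hxb; exact hxy hxb
  have hby' := (h.deleteEdges_pair hxb.ne' hby).mp hxb.symm
  have : (G.deleteEdges {s(x, y)}).edist x y = 2 :=
    edist_eq_two_iff.mpr ⟨hne, hxy, p.snd, hxb, hby'.symm⟩
  rw [dist, this]; rfl

end AreTwins

lemma induce_deleteEdges_of_mem {s : Set V} (hx : x ∈ s) (hy : y ∈ s) :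
    (G.deleteEdges {s(x, y)}).induce s =
      (G.induce s).deleteEdges {s(⟨x, hx⟩, ⟨y, hy⟩)} := by
  ext a b
  simp [Subtype.ext_iff]

lemma induce_deleteEdges_of_not_mem {s : Set V} (h : ¬(x ∈ s ∧ y ∈ s)) :
    (G.deleteEdges {s(x, y)}).induce s = G.induce s := by
  ext a b
  simp only [comap_adj, Function.Embedding.subtype_apply, deleteEdges_adj,
    Set.mem_singleton_iff, and_iff_left_iff_imp]
  rintro - hab
  rcases Sym2.eq_iff.mp hab with ⟨rfl, rfl⟩ | ⟨rfl, rfl⟩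
  exacts [h ⟨a.2, b.2⟩, h ⟨b.2, a.2⟩]

end SimpleGraph

theorem stmt16_general (V : Type) (G : SimpleGraph V)
    (hDH : IsDistHereditary G) (x y : V) (hadj : G.Adj x y)
    (htwin : G.neighborSet x ∪ {x} = G.neighborSet y ∪ {y}) :
    IsDistHereditary (G.deleteEdges {s(x, y)}) := by
  have htw := areTwins_of_neighborSet_union_eq htwin
  intro s hconn u v
  by_cases hs : x ∈ s ∧ y ∈ s
  · obtain ⟨hx, hy⟩ := hs
    have hr := (hconn ⟨x, hx⟩ ⟨y, hy⟩).map (Embedding.induce s).toHom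
    rw [induce_deleteEdges_of_mem hx hy] at hconn ⊢
    have htw' : (G.induce s).AreTwins ⟨x, hx⟩ ⟨y, hy⟩ := htw.comap
    by_cases huv : s(u, v) = s(⟨x, hx⟩, ⟨y, hy⟩)
    · have hne : (⟨x, hx⟩ : s) ≠ ⟨y, hy⟩ := Subtype.coe_ne_coe.mp hadj.ne
      rcases Sym2.eq_iff.mp huv with ⟨rfl, rfl⟩ | ⟨rfl, rfl⟩
      · rw [htw'.dist_deleteEdges_self hne (hconn _ _), htw.dist_deleteEdges_self hadj.ne hr]
      · rw [dist_comm, htw'.dist_deleteEdges_self hne (hconn _ _), dist_comm,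
          htw.dist_deleteEdges_self hadj.ne hr]
    · have huv' : s(u.1, v.1) ≠ s(x, y) := fun h ↦ huv (by
        simpa [Sym2.eq_iff, Subtype.ext_iff] using h)
      rw [htw'.dist_deleteEdges huv, hDH s (hconn.mono (deleteEdges_le _)) u v,
        htw.dist_deleteEdges huv']
  · rw [induce_deleteEdges_of_not_mem hs] at hconn ⊢
    have huv : s(u.1, v.1) ≠ s(x, y) := by
      intro h
      rcases Sym2.eq_iff.mp h with ⟨hu, hv⟩ | ⟨hu, hv⟩
      exacts [hs ⟨hu ▸ u.2, hv ▸ v.2⟩, hs ⟨hv ▸ v.2, hu ▸ u.2⟩]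
    rw [hDH s hconn u v, htw.dist_deleteEdges huv]

/-- deleting the edge between two adjacent true twins of a
distance-hereditary graph yields a distance-hereditary graph. -/
theorem stmt16 (V : Type) [Fintype V] (G : SimpleGraph V)
    (hDH : IsDistHereditary G) (x y : V) (hadj : G.Adj x y)
    (htwin : G.neighborSet x ∪ {x} = G.neighborSet y ∪ {y}) :
    IsDistHereditary (G.deleteEdges {s(x, y)}) :=
  stmt16_general V G hDH x y hadj htwin
end
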